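/- arXiv:2004.08627 — 6 statements merged into one kernel-verified Lean document; each statement's English description precedes it below -/
import Mathlib

section
/- Conversely, if (R, L) is a unital ring with an R^op-R-bimodule L carrying an additive involution l ↦ l̄ with overline(r^op l r') = r'^op l̄ r, and Λ is any R^•-invariant additive subgroup of L with Λ_min ≤ Λ ≤ Λ_max, then (R, L, L/Λ) is an even quadratic ring with φ the quotient map and tr(l + Λ) = l + l̄. -/
/-- A quadratic ring `(R, L, A)`: `R` a unital ring, `L` an `Rᵒᵖ`-`R`-bimodule with
involution `bar`, `A` a right `R^•`-monoid-module, with maps `φ : L → A`, `tr : A → L`.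
`lsmul r l` denotes `rᵒᵖ * l` (the left `Rᵒᵖ`-action) and `rsmul l r` denotes `l * r`. -/
structure QuadraticRing (R L A : Type*) [Ring R] [AddCommGroup L] [AddCommGroup A] where
  lsmul : R → L → L
  rsmul : L → R → L
  lsmul_add : ∀ r l l', lsmul r (l + l') = lsmul r l + lsmul r l'
  add_lsmul : ∀ r r' l, lsmul (r + r') l = lsmul r l + lsmul r' l
  mul_lsmul : ∀ r r' l, lsmul (r * r') l = lsmul r' (lsmul r l)
  one_lsmul : ∀ l, lsmul 1 l = l
  rsmul_add : ∀ l l' r, rsmul (l + l') r = rsmul l r + rsmul l' r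
  rsmul_add_right : ∀ l r r', rsmul l (r + r') = rsmul l r + rsmul l r'
  rsmul_mul : ∀ l r r', rsmul l (r * r') = rsmul (rsmul l r) r'
  rsmul_one : ∀ l, rsmul l 1 = l
  lsmul_rsmul : ∀ r l r', lsmul r (rsmul l r') = rsmul (lsmul r l) r'
  bar : L → L
  bar_add : ∀ l l', bar (l + l') = bar l + bar l'
  bar_bar : ∀ l, bar (bar l) = l
  bar_smul : ∀ r l r', bar (lsmul r (rsmul l r')) = lsmul r' (rsmul (bar l) r)
  act : A → R → A
  act_one : ∀ a, act a 1 = a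
  act_mul : ∀ a r r', act (act a r) r' = act a (r * r')
  phi : L → A
  phi_add : ∀ l l', phi (l + l') = phi l + phi l'
  tr : A → L
  tr_add : ∀ a a', tr (a + a') = tr a + tr a'
  phi_conj : ∀ r l, phi (lsmul r (rsmul l r)) = act (phi l) r
  tr_act : ∀ a r, tr (act a r) = lsmul r (rsmul (tr a) r)
  tr_phi : ∀ l, tr (phi l) = l + bar l
  bar_tr : ∀ a, bar (tr a) = tr a
  phi_bar : ∀ l, phi (bar l) = phi l
  act_add : ∀ a r r', act a (r + r') = act a r + phi (lsmul r (rsmul (tr a) r')) + act a r'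

/-!
Take `φ` to be the quotient map, `tr` is induced by `l ↦ l + l̄`, which kills `Λ`
because `Λ ≤ Λ_max`, and `r` acts by `l ↦ rᵒᵖ l r`, which preserves `Λ` by invariance. The only
axiom with content is the expansion of `(l + Λ) · (r + r')`: its cross term `r'ᵒᵖ l r` is the
involute of `rᵒᵖ l̄ r'`, hence congruent to it modulo `Λ ⊇ Λ_min`.
-/

namespace QuadraticRing

section

variable {R L : Type*} [AddCommGroup L] {lsmul : R → L → L} {rsmul : L → R → L}
  {bar : L → L} {Λ : AddSubgroup L}

theorem mk_bar_eq_mk (hmin : ∀ l, l - bar l ∈ Λ) (l : L) :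
    (bar l : L ⧸ Λ) = l :=
  ((QuotientAddGroup.eq_iff_sub_mem).2 (hmin l)).symm

theorem mk_lsmul_rsmul_swap
    (bar_bar : ∀ l, bar (bar l) = l)
    (bar_smul : ∀ r l r', bar (lsmul r (rsmul l r')) = lsmul r' (rsmul (bar l) r))
    (hmin : ∀ l, l - bar l ∈ Λ) (r r' : R) (l : L) :
    (lsmul r' (rsmul l r) : L ⧸ Λ) = lsmul r (rsmul (bar l) r') := by
  rw [← mk_bar_eq_mk hmin (lsmul r (rsmul (bar l) r')), bar_smul, bar_bar]

theorem mk_lsmul_rsmul_add [Add R]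
    (lsmul_add : ∀ r l l', lsmul r (l + l') = lsmul r l + lsmul r l')
    (add_lsmul : ∀ r r' l, lsmul (r + r') l = lsmul r l + lsmul r' l)
    (rsmul_add : ∀ l l' r, rsmul (l + l') r = rsmul l r + rsmul l' r)
    (rsmul_add_right : ∀ l r r', rsmul l (r + r') = rsmul l r + rsmul l r')
    (bar_bar : ∀ l, bar (bar l) = l)
    (bar_smul : ∀ r l r', bar (lsmul r (rsmul l r')) = lsmul r' (rsmul (bar l) r))
    (hmin : ∀ l, l - bar l ∈ Λ) (r r' : R) (l : L) :
    (lsmul (r + r') (rsmul l (r + r')) : L ⧸ Λ) =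
      lsmul r (rsmul l r) + lsmul r (rsmul (l + bar l) r') + lsmul r' (rsmul l r') := by
  have swap := mk_lsmul_rsmul_swap bar_bar bar_smul hmin r r' l
  simp only [rsmul_add_right, lsmul_add, add_lsmul, rsmul_add, QuotientAddGroup.mk_add, swap]
  abel

end

def ofAddSubgroup {R L : Type*} [Ring R] [AddCommGroup L]
    (lsmul : R → L → L) (rsmul : L → R → L) (bar : L → L)
    (lsmul_add : ∀ r l l', lsmul r (l + l') = lsmul r l + lsmul r l')
    (add_lsmul : ∀ r r' l, lsmul (r + r') l = lsmul r l + lsmul r' l)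
    (mul_lsmul : ∀ r r' l, lsmul (r * r') l = lsmul r' (lsmul r l))
    (one_lsmul : ∀ l, lsmul 1 l = l)
    (rsmul_add : ∀ l l' r, rsmul (l + l') r = rsmul l r + rsmul l' r)
    (rsmul_add_right : ∀ l r r', rsmul l (r + r') = rsmul l r + rsmul l r')
    (rsmul_mul : ∀ l r r', rsmul l (r * r') = rsmul (rsmul l r) r')
    (rsmul_one : ∀ l, rsmul l 1 = l)
    (lsmul_rsmul : ∀ r l r', lsmul r (rsmul l r') = rsmul (lsmul r l) r')
    (bar_add : ∀ l l', bar (l + l') = bar l + bar l')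
    (bar_bar : ∀ l, bar (bar l) = l)
    (bar_smul : ∀ r l r', bar (lsmul r (rsmul l r')) = lsmul r' (rsmul (bar l) r))
    (Λ : AddSubgroup L)
    (hinv : ∀ l ∈ Λ, ∀ r, lsmul r (rsmul l r) ∈ Λ)
    (hmin : ∀ l, l - bar l ∈ Λ)
    (hmax : ∀ l ∈ Λ, l + bar l = 0) :
    QuadraticRing R L (L ⧸ Λ) where
  lsmul := lsmul
  rsmul := rsmul
  lsmul_add := lsmul_add
  add_lsmul := add_lsmul
  mul_lsmul := mul_lsmul
  one_lsmul := one_lsmul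
  rsmul_add := rsmul_add
  rsmul_add_right := rsmul_add_right
  rsmul_mul := rsmul_mul
  rsmul_one := rsmul_one
  lsmul_rsmul := lsmul_rsmul
  bar := bar
  bar_add := bar_add
  bar_bar := bar_bar
  bar_smul := bar_smul
  act a r := QuotientAddGroup.map Λ Λ
    (AddMonoidHom.mk' (fun l => lsmul r (rsmul l r)) fun l l' => by rw [rsmul_add, lsmul_add])
    (fun l hl => hinv l hl r) a
  act_one a := QuotientAddGroup.induction_on a fun l => by
    change ((lsmul 1 (rsmul l 1) : L) : L ⧸ Λ) = l
    rw [rsmul_one, one_lsmul]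
  act_mul a r r' := QuotientAddGroup.induction_on a fun l => by
    change ((lsmul r' (rsmul (lsmul r (rsmul l r)) r') : L) : L ⧸ Λ) =
      (lsmul (r * r') (rsmul l (r * r')) : L)
    rw [mul_lsmul, rsmul_mul, ← lsmul_rsmul]
  phi := QuotientAddGroup.mk
  phi_add _ _ := rfl
  tr := QuotientAddGroup.lift Λ
    (AddMonoidHom.mk' (fun l => l + bar l) fun l l' => by rw [bar_add]; abel) hmax
  tr_add := map_add _
  phi_conj _ _ := rfl
  tr_act a r := QuotientAddGroup.induction_on a fun l => by
    change lsmul r (rsmul l r) + bar (lsmul r (rsmul l r)) = _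
    rw [bar_smul, ← lsmul_add, ← rsmul_add]
    rfl
  tr_phi _ := rfl
  bar_tr a := QuotientAddGroup.induction_on a fun l => by
    change bar (l + bar l) = l + bar l
    rw [bar_add, bar_bar, add_comm]
  phi_bar := mk_bar_eq_mk hmin
  act_add a r r' := QuotientAddGroup.induction_on a
    (mk_lsmul_rsmul_add lsmul_add add_lsmul rsmul_add rsmul_add_right bar_bar bar_smul hmin r r')

end QuadraticRing

/-- If `L` is an `Rᵒᵖ`-`R`-bimodule with involution and `Λ` is an
`R^•`-invariant additive subgroup with `Λ_min ≤ Λ ≤ Λ_max`, then `(R, L, L/Λ)` is an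
even quadratic ring with `φ` the quotient map and `tr(l + Λ) = l + l̄`. -/
theorem stmt_2 {R L : Type*} [Ring R] [AddCommGroup L]
    (lsmul : R → L → L) (rsmul : L → R → L) (bar : L → L)
    (lsmul_add : ∀ r l l', lsmul r (l + l') = lsmul r l + lsmul r l')
    (add_lsmul : ∀ r r' l, lsmul (r + r') l = lsmul r l + lsmul r' l)
    (mul_lsmul : ∀ r r' l, lsmul (r * r') l = lsmul r' (lsmul r l))
    (one_lsmul : ∀ l, lsmul 1 l = l)
    (rsmul_add : ∀ l l' r, rsmul (l + l') r = rsmul l r + rsmul l' r)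
    (rsmul_add_right : ∀ l r r', rsmul l (r + r') = rsmul l r + rsmul l r')
    (rsmul_mul : ∀ l r r', rsmul l (r * r') = rsmul (rsmul l r) r')
    (rsmul_one : ∀ l, rsmul l 1 = l)
    (lsmul_rsmul : ∀ r l r', lsmul r (rsmul l r') = rsmul (lsmul r l) r')
    (bar_add : ∀ l l', bar (l + l') = bar l + bar l')
    (bar_bar : ∀ l, bar (bar l) = l)
    (bar_smul : ∀ r l r', bar (lsmul r (rsmul l r')) = lsmul r' (rsmul (bar l) r))
    (Λ : AddSubgroup L)
    (hinv : ∀ l ∈ Λ, ∀ r, lsmul r (rsmul l r) ∈ Λ)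
    (hmin : ∀ l, l - bar l ∈ Λ)
    (hmax : ∀ l ∈ Λ, l + bar l = 0) :
    ∃ Q : QuadraticRing R L (L ⧸ Λ),
      Q.lsmul = lsmul ∧ Q.rsmul = rsmul ∧ Q.bar = bar ∧
      Q.phi = (QuotientAddGroup.mk : L → L ⧸ Λ) ∧
      (∀ l, Q.tr (QuotientAddGroup.mk l) = l + bar l) ∧
      Function.Surjective Q.phi :=
  ⟨QuadraticRing.ofAddSubgroup lsmul rsmul bar lsmul_add add_lsmul mul_lsmul one_lsmul rsmul_add
      rsmul_add_right rsmul_mul rsmul_one lsmul_rsmul bar_add bar_bar bar_smul Λ hinv hmin hmax,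
    rfl, rfl, rfl, rfl, fun _ => rfl, QuotientAddGroup.mk_surjective⟩
end

section
/- Every 2-step nilpotent K-module (M, M₀) such that the K-module M/M₀ is free splits, i.e., is isomorphic as a 2-step nilpotent K-module to a central extension M₁ ∔ M₀ determined by a K-bilinear 2-cocycle b : M₁ × M₁ → M₀. -/
/-! Choose preimages `e i` of the basis vectors of `M/M₀` and a linear order on `I`. The ordered
products `∏ (e i)·xᵢ` (over the support of `x`, in increasing `i`) form a section `x ↦ s x` of
`M → M/M₀` with `(s x)·k = s (k • x)`, and every `m` is uniquely `s (σ m) ∔ v` with `v ∈ M₀`.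
Rearranging `s x ∔ s y` into `s (x + y)` only moves `(e j)·xⱼ` past `(e i)·yᵢ` for `i < j`, at the
cost `xⱼ yᵢ [e j, e i]`, and merges `(e i)·xᵢ ∔ (e i)·yᵢ` into `(e i)·(xᵢ + yᵢ)`, at the cost
`-xᵢ yᵢ τ(e i)`. Hence `s x ∔ s y = b(x, y) ∔ s (x + y)` for a bilinear `b`, and `m ↦ (σ m, v)` is
the splitting. The formula for `τ` comes from `m ∔ m·(-1) = τ m`. -/

/-- A 2-step nilpotent `K`-module `(M, M₀)`: `M` is a group (operation `mul`, written
multiplicatively, with the group structure given explicitly), `M₀` a central subgroup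
realized by an injective homomorphism `ι` from a `K`-module, with commutator map
`comm`, a unital right action `act` of the multiplicative monoid `K^•` by
endomorphisms, and a map `τ : M → M₀` satisfying the axioms of the paper. -/
structure TwoStepNilMod (K M M₀ : Type*) [CommRing K] [AddCommGroup M₀]
    [Module K M₀] where
  mul : M → M → M
  one : M
  inv : M → M
  mul_assoc : ∀ a b c, mul (mul a b) c = mul a (mul b c)
  one_mul : ∀ a, mul one a = a
  inv_mul : ∀ a, mul (inv a) a = one
  ι : M₀ → M
  ι_inj : Function.Injective ι
  ι_hom : ∀ v w, ι (v + w) = mul (ι v) (ι w)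
  central : ∀ v m, mul (ι v) m = mul m (ι v)
  comm : M → M → M₀
  comm_spec : ∀ m m', mul m m' = mul (ι (comm m m')) (mul m' m)
  act : M → K → M
  act_one : ∀ m, act m 1 = m
  act_act : ∀ m k k', act (act m k) k' = act m (k * k')
  act_hom : ∀ m m' k, act (mul m m') k = mul (act m k) (act m' k)
  comm_act : ∀ m m' k k', comm (act m k) (act m' k') = (k * k') • comm m m'
  τ : M → M₀
  act_add : ∀ m k k', act m (k + k') = mul (act m k) (mul (ι ((k * k') • τ m)) (act m k'))
  act_ι : ∀ v k, act (ι v) k = ι ((k * k) • v)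

structure TwoStepNilpotent (K G A : Type*) [CommRing K] [Group G] [AddCommGroup A]
    [Module K A] where
  ι : A → G
  ι_injective : Function.Injective ι
  ι_add : ∀ v w, ι (v + w) = ι v * ι w
  ι_mul_comm : ∀ v g, ι v * g = g * ι v
  comm : G → G → A
  mul_eq_ι_comm_mul : ∀ g h, g * h = ι (comm g h) * (h * g)
  act : G → K → G
  act_one : ∀ g, act g 1 = g
  act_act : ∀ g k k', act (act g k) k' = act g (k * k')
  mul_act : ∀ g h k, act (g * h) k = act g k * act h k
  comm_act_act : ∀ g h k k', comm (act g k) (act h k') = (k * k') • comm g h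
  τ : G → A
  act_add : ∀ g k k', act g (k + k') = act g k * (ι ((k * k') • τ g) * act g k')
  ι_act : ∀ v k, act (ι v) k = ι ((k * k) • v)

namespace TwoStepNilpotent

variable {K G A I : Type*} [CommRing K] [Group G] [AddCommGroup A] [Module K A]
variable (N : TwoStepNilpotent K G A)

lemma ι_zero : N.ι 0 = 1 :=
  left_eq_mul.mp (by rw [← N.ι_add, add_zero] : N.ι 0 = N.ι 0 * N.ι 0)

lemma mul_ι_mul (v : A) (g h : G) : g * (N.ι v * h) = N.ι v * (g * h) := by
  rw [← mul_assoc, ← N.ι_mul_comm, mul_assoc]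

lemma ι_mul_ι_mul (v w : A) (g : G) : N.ι v * (N.ι w * g) = N.ι (v + w) * g := by
  rw [N.ι_add, mul_assoc]

lemma mul_ι_mul_mul_ι (v w : A) (g h : G) :
    g * N.ι v * (h * N.ι w) = g * h * N.ι (v + w) := by
  simp only [mul_assoc]
  rw [← mul_assoc (N.ι v), N.ι_mul_comm v h, mul_assoc, ← N.ι_add]

lemma act_zero (g : G) : N.act g 0 = 1 := by
  have h := N.act_add g 0 0
  rw [add_zero, mul_zero, zero_smul, N.ι_zero, one_mul] at h
  exact left_eq_mul.mp h

lemma one_act (k : K) : N.act 1 k = 1 :=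
  left_eq_mul.mp (by rw [← N.mul_act, one_mul] : N.act 1 k = N.act 1 k * N.act 1 k)

lemma act_mul_act (g : G) (k k' : K) :
    N.act g k * N.act g k' = N.ι (-((k * k') • N.τ g)) * N.act g (k + k') := by
  rw [N.act_add, N.mul_ι_mul, N.ι_mul_ι_mul, neg_add_cancel, N.ι_zero, one_mul]

lemma mul_act_neg_one (g : G) : g * N.act g (-1) = N.ι (N.τ g) := by
  have h := N.act_add g 1 (-1)
  rw [add_neg_cancel, N.act_zero, N.act_one, N.mul_ι_mul, one_mul, neg_one_smul] at h
  rw [eq_inv_of_mul_eq_one_right h.symm]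
  exact inv_eq_of_mul_eq_one_right (by rw [← N.ι_add, neg_add_cancel, N.ι_zero])

lemma list_prod_mul (L : List G) (h : G) :
    L.prod * h = N.ι ((L.map fun g => N.comm g h).sum) * (h * L.prod) := by
  induction L with
  | nil => simp [N.ι_zero]
  | cons g L ih =>
    rw [List.prod_cons, mul_assoc, ih, N.mul_ι_mul, ← mul_assoc g h, N.mul_eq_ι_comm_mul g h,
      List.map_cons, List.sum_cons, mul_assoc, N.ι_mul_ι_mul, add_comm, ← mul_assoc h]

section OrderedProduct

variable [LinearOrder I] (e : I → G)

def prodOn (x : I →₀ K) (s : Finset I) : G :=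
  ((s.sort (· ≤ ·)).map fun i => N.act (e i) (x i)).prod

def orderedProd (x : I →₀ K) : G := N.prodOn e x x.support

variable {e}

@[simp]
lemma prodOn_empty (x : I →₀ K) : N.prodOn e x ∅ = 1 := by
  simp [prodOn]

lemma prodOn_insert_of_lt (x : I →₀ K) {a : I} {s : Finset I} (ha : ∀ b ∈ s, a < b) :
    N.prodOn e x (insert a s) = N.act (e a) (x a) * N.prodOn e x s := by
  rw [prodOn, Finset.sort_insert _ (fun b hb => (ha b hb).le) fun h => lt_irrefl a (ha a h)]
  rfl

lemma act_prodOn (x : I →₀ K) (k : K) (s : Finset I) :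
    N.act (N.prodOn e x s) k = N.prodOn e (k • x) s := by
  induction s using Finset.induction_on_min with
  | empty => simp [N.one_act]
  | insert a s ha ih =>
    rw [N.prodOn_insert_of_lt _ ha, N.prodOn_insert_of_lt _ ha, N.mul_act, N.act_act, ih,
      Finsupp.smul_apply, smul_eq_mul, mul_comm]

lemma prodOn_filter_ne_zero [DecidableEq K] (x : I →₀ K) (s : Finset I) :
    N.prodOn e x (s.filter (x · ≠ 0)) = N.prodOn e x s := by
  induction s using Finset.induction_on_min with
  | empty => simp
  | insert a s ha ih =>
    have ha' : ∀ b ∈ s.filter (x · ≠ 0), a < b := fun b hb => ha b (Finset.mem_of_mem_filter b hb)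
    rw [Finset.filter_insert, N.prodOn_insert_of_lt _ ha]
    split_ifs with hxa
    · rw [N.prodOn_insert_of_lt _ ha', ih]
    · rw [not_not.mp hxa, N.act_zero, one_mul, ih]

lemma prodOn_eq_orderedProd {x : I →₀ K} {s : Finset I} (hs : x.support ⊆ s) :
    N.prodOn e x s = N.orderedProd e x := by
  classical
  rw [orderedProd, ← N.prodOn_filter_ne_zero x s]
  congr 1
  ext i
  simpa using fun hi => hs (Finsupp.mem_support_iff.mpr hi)

lemma act_orderedProd (x : I →₀ K) (k : K) :
    N.act (N.orderedProd e x) k = N.orderedProd e (k • x) := by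
  rw [orderedProd, act_prodOn]
  exact N.prodOn_eq_orderedProd Finsupp.support_smul

@[simp]
lemma orderedProd_zero : N.orderedProd e (0 : I →₀ K) = 1 := by
  simp [orderedProd]

end OrderedProduct

section Cocycle

variable [LinearOrder I] (e : I → G)

def coeff (j i : I) : A :=
  if i < j then N.comm (e j) (e i) else if j = i then -N.τ (e i) else 0

noncomputable def cocycle : (I →₀ K) →ₗ[K] (I →₀ K) →ₗ[K] A :=
  Finsupp.lsum K fun j => LinearMap.toSpanSingleton K ((I →₀ K) →ₗ[K] A)
    (Finsupp.lsum K fun i => LinearMap.toSpanSingleton K A (N.coeff e j i))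

variable {e}

lemma cocycle_eq_sum {x y : I →₀ K} {s : Finset I} (hx : x.support ⊆ s) (hy : y.support ⊆ s) :
    N.cocycle e x y = ∑ j ∈ s, ∑ i ∈ s, (x j * y i) • N.coeff e j i := by
  have hsum : N.cocycle e x y = x.sum fun j a => y.sum fun i b => (a * b) • N.coeff e j i := by
    simp only [cocycle, Finsupp.lsum_apply, Finsupp.sum, LinearMap.toSpanSingleton_apply,
      LinearMap.sum_apply, LinearMap.smul_apply, Finset.smul_sum, smul_smul]
  rw [hsum, Finsupp.sum_of_support_subset _ hx _ fun _ _ => by simp]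
  exact Finset.sum_congr rfl fun j _ =>
    Finsupp.sum_of_support_subset _ hy _ fun _ _ => by rw [mul_zero, zero_smul]

lemma sum_coeff_insert_of_lt (x y : I →₀ K) {a : I} {s : Finset I} (ha : ∀ b ∈ s, a < b) :
    ∑ j ∈ insert a s, ∑ i ∈ insert a s, (x j * y i) • N.coeff e j i =
      ∑ j ∈ s, (x j * y a) • N.comm (e j) (e a) + -((x a * y a) • N.τ (e a)) +
        ∑ j ∈ s, ∑ i ∈ s, (x j * y i) • N.coeff e j i := by
  have has : a ∉ s := fun h => lt_irrefl a (ha a h)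
  have hrow : ∑ i ∈ insert a s, (x a * y i) • N.coeff e a i = -((x a * y a) • N.τ (e a)) := by
    rw [Finset.sum_insert has, Finset.sum_eq_zero fun i hi => ?_, add_zero]
    · simp [coeff]
    · simp [coeff, (ha i hi).ne, not_lt_of_gt (ha i hi)]
  have hcol : ∀ j ∈ s, (x j * y a) • N.coeff e j a = (x j * y a) • N.comm (e j) (e a) :=
    fun j hj => by simp [coeff, ha j hj]
  rw [Finset.sum_insert has, hrow]
  simp only [Finset.sum_insert has, Finset.sum_add_distrib, Finset.sum_congr rfl hcol]
  abel

lemma prodOn_mul_act (x : I →₀ K) (s : Finset I) (i : I) (a : K) :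
    N.prodOn e x s * N.act (e i) a =
      N.ι (∑ j ∈ s, (x j * a) • N.comm (e j) (e i)) * (N.act (e i) a * N.prodOn e x s) := by
  rw [prodOn, N.list_prod_mul, List.map_map]
  congr 2
  rw [← List.sum_toFinset _ (Finset.sort_nodup _ _), Finset.sort_toFinset]
  exact Finset.sum_congr rfl fun j _ => N.comm_act_act _ _ _ _

lemma prodOn_mul_prodOn (x y : I →₀ K) (s : Finset I) :
    N.prodOn e x s * N.prodOn e y s =
      N.ι (∑ j ∈ s, ∑ i ∈ s, (x j * y i) • N.coeff e j i) * N.prodOn e (x + y) s := by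
  induction s using Finset.induction_on_min with
  | empty => simp [N.ι_zero]
  | insert a s ha ih =>
    simp only [N.prodOn_insert_of_lt _ ha, N.sum_coeff_insert_of_lt x y ha]
    calc N.act (e a) (x a) * N.prodOn e x s * (N.act (e a) (y a) * N.prodOn e y s)
        = N.act (e a) (x a) * ((N.prodOn e x s * N.act (e a) (y a)) * N.prodOn e y s) := by
          simp only [mul_assoc]
      _ = N.ι (∑ j ∈ s, (x j * y a) • N.comm (e j) (e a)) *
            ((N.act (e a) (x a) * N.act (e a) (y a)) * (N.prodOn e x s * N.prodOn e y s)) := by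
          rw [N.prodOn_mul_act]
          simp only [mul_assoc, N.mul_ι_mul]
      _ = N.ι (∑ j ∈ s, (x j * y a) • N.comm (e j) (e a)) *
            ((N.ι (-((x a * y a) • N.τ (e a))) * N.act (e a) (x a + y a)) *
              (N.ι (∑ j ∈ s, ∑ i ∈ s, (x j * y i) • N.coeff e j i) * N.prodOn e (x + y) s)) := by
          rw [N.act_mul_act, ih]
      _ = _ := by
          rw [← Finsupp.add_apply, mul_assoc (N.ι _), N.mul_ι_mul, N.ι_mul_ι_mul, N.mul_ι_mul,
            N.ι_mul_ι_mul]
          congr 2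
          abel

lemma orderedProd_mul (x y : I →₀ K) :
    N.orderedProd e x * N.orderedProd e y = N.ι (N.cocycle e x y) * N.orderedProd e (x + y) := by
  have hx : x.support ⊆ x.support ∪ y.support := Finset.subset_union_left
  have hy : y.support ⊆ x.support ∪ y.support := Finset.subset_union_right
  rw [← N.prodOn_eq_orderedProd hx, ← N.prodOn_eq_orderedProd hy,
    ← N.prodOn_eq_orderedProd Finsupp.support_add, prodOn_mul_prodOn, N.cocycle_eq_sum hx hy]

end Cocycle

structure FreeQuotient (N : TwoStepNilpotent K G A) (I : Type*) where
  σ : G → I →₀ K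
  surjective : Function.Surjective σ
  map_mul : ∀ g h, σ (g * h) = σ g + σ h
  map_act : ∀ g k, σ (N.act g k) = k • σ g
  eq_zero_iff : ∀ g, σ g = 0 ↔ ∃ v, g = N.ι v

namespace FreeQuotient

variable {N} (Q : N.FreeQuotient I)

lemma map_one : Q.σ 1 = 0 :=
  left_eq_add.mp (by rw [← Q.map_mul, one_mul] : Q.σ 1 = Q.σ 1 + Q.σ 1)

lemma map_inv (g : G) : Q.σ g⁻¹ = -Q.σ g :=
  eq_neg_of_add_eq_zero_left (by rw [← Q.map_mul, inv_mul_cancel, Q.map_one])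

lemma map_ι (v : A) : Q.σ (N.ι v) = 0 := (Q.eq_zero_iff _).mpr ⟨v, rfl⟩

noncomputable def basisLift (i : I) : G := (Q.surjective (Finsupp.single i 1)).choose

lemma σ_basisLift (i : I) : Q.σ (Q.basisLift i) = Finsupp.single i 1 :=
  (Q.surjective _).choose_spec

variable [LinearOrder I]

noncomputable def lift (x : I →₀ K) : G := N.orderedProd Q.basisLift x

lemma σ_prodOn (x : I →₀ K) (s : Finset I) :
    Q.σ (N.prodOn Q.basisLift x s) = ∑ i ∈ s, Finsupp.single i (x i) := by
  induction s using Finset.induction_on_min with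
  | empty => simp [Q.map_one]
  | insert a s ha ih =>
    rw [N.prodOn_insert_of_lt _ ha, Q.map_mul, Q.map_act, ih, σ_basisLift, Finsupp.smul_single,
      smul_eq_mul, mul_one, Finset.sum_insert fun h => lt_irrefl a (ha a h)]

lemma σ_lift (x : I →₀ K) : Q.σ (Q.lift x) = x := by
  rw [lift, TwoStepNilpotent.orderedProd, σ_prodOn]
  exact Finsupp.sum_single x

lemma exists_eq_lift_mul_ι (g : G) : ∃ v, g = Q.lift (Q.σ g) * N.ι v := by
  obtain ⟨v, hv⟩ := (Q.eq_zero_iff ((Q.lift (Q.σ g))⁻¹ * g)).mp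
    (by rw [Q.map_mul, Q.map_inv, σ_lift, neg_add_cancel])
  exact ⟨v, by rw [← hv, mul_inv_cancel_left]⟩

noncomputable def fiberCoord (g : G) : A := (Q.exists_eq_lift_mul_ι g).choose

lemma eq_lift_mul_ι_fiberCoord (g : G) : g = Q.lift (Q.σ g) * N.ι (Q.fiberCoord g) :=
  (Q.exists_eq_lift_mul_ι g).choose_spec

lemma σ_lift_mul_ι (x : I →₀ K) (v : A) : Q.σ (Q.lift x * N.ι v) = x := by
  rw [Q.map_mul, Q.map_ι, σ_lift, add_zero]

lemma fiberCoord_lift_mul_ι (x : I →₀ K) (v : A) : Q.fiberCoord (Q.lift x * N.ι v) = v := by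
  have h := Q.eq_lift_mul_ι_fiberCoord (Q.lift x * N.ι v)
  rw [σ_lift_mul_ι] at h
  exact N.ι_injective (mul_left_cancel h).symm

lemma fiberCoord_ι (v : A) : Q.fiberCoord (N.ι v) = v := by
  simpa [Q.map_ι, lift] using Q.fiberCoord_lift_mul_ι 0 v

lemma fiberCoord_mul (g h : G) :
    Q.fiberCoord (g * h) =
      Q.fiberCoord g + N.cocycle Q.basisLift (Q.σ g) (Q.σ h) + Q.fiberCoord h := by
  have hgh : g * h = Q.lift (Q.σ g + Q.σ h) *
      N.ι (Q.fiberCoord g + N.cocycle Q.basisLift (Q.σ g) (Q.σ h) + Q.fiberCoord h) := by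
    conv_lhs => rw [Q.eq_lift_mul_ι_fiberCoord g, Q.eq_lift_mul_ι_fiberCoord h]
    rw [N.mul_ι_mul_mul_ι, lift, lift, N.orderedProd_mul, N.ι_mul_comm, mul_assoc, ← N.ι_add,
      ← lift]
    congr 2
    abel
  rw [hgh, fiberCoord_lift_mul_ι]

lemma fiberCoord_act (g : G) (k : K) : Q.fiberCoord (N.act g k) = (k * k) • Q.fiberCoord g := by
  conv_lhs => rw [Q.eq_lift_mul_ι_fiberCoord g]
  rw [N.mul_act, lift, N.act_orderedProd, N.ι_act, ← lift, fiberCoord_lift_mul_ι]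

lemma τ_eq (g : G) :
    N.τ g = 2 • Q.fiberCoord g - N.cocycle Q.basisLift (Q.σ g) (Q.σ g) := by
  have h := congrArg Q.fiberCoord (N.mul_act_neg_one g)
  rw [fiberCoord_mul, fiberCoord_act, fiberCoord_ι, Q.map_act, neg_one_smul, map_neg,
    neg_one_mul, neg_neg, one_smul] at h
  rw [← h, two_nsmul]
  abel

end FreeQuotient

theorem exists_split (Q : N.FreeQuotient I) :
    ∃ (b : (I →₀ K) →ₗ[K] (I →₀ K) →ₗ[K] A) (f : G → (I →₀ K) × A),
      Function.Bijective f ∧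
      (∀ g h, f (g * h) = ((f g).1 + (f h).1, (f g).2 + b (f g).1 (f h).1 + (f h).2)) ∧
      (∀ g k, f (N.act g k) = (k • (f g).1, (k * k) • (f g).2)) ∧
      (∀ v, f (N.ι v) = (0, v)) ∧
      (∀ g, N.τ g = 2 • (f g).2 - b (f g).1 (f g).1) := by
  let : LinearOrder I := IsWellOrder.linearOrder WellOrderingRel
  refine ⟨N.cocycle Q.basisLift, fun g => (Q.σ g, Q.fiberCoord g), ⟨?_, ?_⟩,
    fun g h => Prod.ext (Q.map_mul g h) (Q.fiberCoord_mul g h),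
    fun g k => Prod.ext (Q.map_act g k) (Q.fiberCoord_act g k),
    fun v => Prod.ext (Q.map_ι v) (Q.fiberCoord_ι v), Q.τ_eq⟩
  · intro g h hgh
    obtain ⟨hσ, hp⟩ := Prod.ext_iff.mp hgh
    rw [Q.eq_lift_mul_ι_fiberCoord g, Q.eq_lift_mul_ι_fiberCoord h]
    exact congrArg₂ (fun x v => Q.lift x * N.ι v) hσ hp
  · rintro ⟨x, v⟩
    exact ⟨Q.lift x * N.ι v, Prod.ext (Q.σ_lift_mul_ι x v) (Q.fiberCoord_lift_mul_ι x v)⟩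

end TwoStepNilpotent

/-- Every 2-step nilpotent `K`-module `(M, M₀)` whose quotient `K`-module
`M/M₀` is free splits: it is isomorphic to a central extension `M₁ ∔ M₀` given by a
`K`-bilinear 2-cocycle `b`. Freeness of `M/M₀` is encoded by a surjection
`σ : M → (I →₀ K)` which is a homomorphism compatible with the action and whose
kernel is exactly `M₀`. -/
theorem stmt_10 {K M M₀ : Type*} [CommRing K] [AddCommGroup M₀] [Module K M₀]
    (T : TwoStepNilMod K M M₀) (I : Type*) (σ : M → (I →₀ K))
    (hsurj : Function.Surjective σ)
    (hhom : ∀ m m', σ (T.mul m m') = σ m + σ m')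
    (hact : ∀ m k, σ (T.act m k) = k • σ m)
    (hker : ∀ m, σ m = 0 ↔ ∃ v, m = T.ι v) :
    ∃ (b : (I →₀ K) →ₗ[K] (I →₀ K) →ₗ[K] M₀) (f : M → (I →₀ K) × M₀),
      Function.Bijective f ∧
      (∀ m m', f (T.mul m m') =
        ((f m).1 + (f m').1, (f m).2 + b (f m).1 (f m').1 + (f m').2)) ∧
      (∀ m k, f (T.act m k) = (k • (f m).1, (k * k) • (f m).2)) ∧
      (∀ v, f (T.ι v) = (0, v)) ∧
      (∀ m, T.τ m = 2 • (f m).2 - b (f m).1 (f m).1) := by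
  let : Mul M := ⟨T.mul⟩
  let : One M := ⟨T.one⟩
  let : Inv M := ⟨T.inv⟩
  let : Group M := Group.ofLeftAxioms T.mul_assoc T.one_mul T.inv_mul
  let N : TwoStepNilpotent K M M₀ :=
    { ι := T.ι, ι_injective := T.ι_inj, ι_add := T.ι_hom, ι_mul_comm := T.central,
      comm := T.comm, mul_eq_ι_comm_mul := T.comm_spec, act := T.act, act_one := T.act_one,
      act_act := T.act_act, mul_act := T.act_hom, comm_act_act := T.comm_act, τ := T.τ,
      act_add := T.act_add, ι_act := T.act_ι }
  let Q : N.FreeQuotient I :=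
    { σ := σ, surjective := hsurj, map_mul := hhom, map_act := hact, eq_zero_iff := hker }
  exact N.exists_split Q
end

section
/- There exists a commutative ring K and a 2-step nilpotent K-module (M, M₀) that is not universal, i.e., for which some scalar extension is not well-defined. Concretely, take K = ℤ[√2], M̃ = K ∔ K the split 2-step nilpotent K-module with 2-cocycle b(x, y) = xy, and M = M̃/A where A is the K^•-invariant subgroup generated by (√2, 1); then the natural map 𝔽₂ ⊗_K M₀ → M ⊠_K 𝔽₂ is the zero map (hence not injective), because (1, √2)·√2 = (0, 1) in M. -/
open scoped TensorProduct commutatorElement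

/-- The defining relations of the scalar extension `M ⊠_K E` of a 2-step nilpotent
`K`-module `(M, M₀)` along `K → E`: generators are the elements of `E ⊗_K M₀`
(via `Sum.inl`) and the symbols `m ⊠ e` (via `Sum.inr (m, e)`). -/
def boxRels {K M M₀ : Type} [CommRing K] [AddCommGroup M₀] [Module K M₀]
    (T : TwoStepNilMod K M M₀) (E : Type) [CommRing E] [Algebra K E] :
    Set (FreeGroup ((E ⊗[K] M₀) ⊕ (M × E))) :=
  {w | (∃ x y : E ⊗[K] M₀,
          w = FreeGroup.of (Sum.inl x) * FreeGroup.of (Sum.inl y) *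
              (FreeGroup.of (Sum.inl (x + y)))⁻¹)
    ∨ (∃ (m : M) (e : E) (x : E ⊗[K] M₀),
          w = ⁅(FreeGroup.of (Sum.inr (m, e)) : FreeGroup ((E ⊗[K] M₀) ⊕ (M × E))),
              FreeGroup.of (Sum.inl x)⁆)
    ∨ (∃ (m m' : M) (e e' : E),
          w = ⁅(FreeGroup.of (Sum.inr (m, e)) : FreeGroup ((E ⊗[K] M₀) ⊕ (M × E))),
              FreeGroup.of (Sum.inr (m', e'))⁆ *
              (FreeGroup.of (Sum.inl ((e * e') ⊗ₜ[K] T.comm m m')))⁻¹)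
    ∨ (∃ (m m' : M) (e : E),
          w = FreeGroup.of (Sum.inr (T.mul m m', e)) *
              (FreeGroup.of (Sum.inr (m, e)) * FreeGroup.of (Sum.inr (m', e)))⁻¹)
    ∨ (∃ (m : M) (k : K) (e : E),
          w = FreeGroup.of (Sum.inr (T.act m k, e)) *
              (FreeGroup.of (Sum.inr (m, algebraMap K E k * e)))⁻¹)
    ∨ (∃ (m : M) (e e' : E),
          w = FreeGroup.of (Sum.inr (m, e + e')) *
              (FreeGroup.of (Sum.inr (m, e)) *
               FreeGroup.of (Sum.inl ((e * e') ⊗ₜ[K] T.τ m)) *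
               FreeGroup.of (Sum.inr (m, e')))⁻¹)
    ∨ (∃ (v : M₀) (e : E),
          w = FreeGroup.of (Sum.inr (T.ι v, e)) *
              (FreeGroup.of (Sum.inl ((e * e) ⊗ₜ[K] v)))⁻¹)}

/-!
Over `𝔽₂` the scalar `√2` of `K = ℤ[√2]` vanishes. For `m = (1, √2)` the element `m · √2`
lies in `M₀`, namely it is `2√2 - 1` modulo `A`, so `e² ⊗ (2√2 - 1) = (m · √2) ⊠ e = m ⊠ 0`
is trivial in `M ⊠_K 𝔽₂`. Since `e² = e` in `𝔽₂` and `2√2 - 1 ↦ 1`, these are all of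
`𝔽₂ ⊗_K K ≅ 𝔽₂`.
-/

namespace TwoStepNilMod

open PresentedGroup

variable {K M M₀ : Type} [CommRing K] [AddCommGroup M₀] [Module K M₀]
  (T : TwoStepNilMod K M M₀) {E : Type} [CommRing E] [Algebra K E]

lemma box_of_inl_add (x y : E ⊗[K] M₀) :
    (of (.inl (x + y)) : PresentedGroup (boxRels T E)) = of (.inl x) * of (.inl y) :=
  (mk_eq_mk_of_mul_inv_mem (Or.inl ⟨x, y, rfl⟩)).symm

lemma box_of_inl_zero : (of (.inl 0) : PresentedGroup (boxRels T E)) = 1 := by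
  simpa using box_of_inl_add T (0 : E ⊗[K] M₀) 0

lemma box_of_inr_zero (m : M) : (of (.inr (m, 0)) : PresentedGroup (boxRels T E)) = 1 := by
  have h : (of (.inr (m, 0 + 0)) : PresentedGroup (boxRels T E)) =
      of (.inr (m, 0)) * of (.inl ((0 * 0 : E) ⊗ₜ[K] T.τ m)) * of (.inr (m, 0)) :=
    mk_eq_mk_of_mul_inv_mem (Or.inr <| Or.inr <| Or.inr <| Or.inr <| Or.inr <| Or.inl
      ⟨m, 0, 0, rfl⟩)
  rw [add_zero, zero_mul, TensorProduct.zero_tmul, box_of_inl_zero, mul_one] at h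
  exact left_eq_mul.mp h

lemma box_of_inr_act (m : M) (k : K) (e : E) :
    (of (.inr (T.act m k, e)) : PresentedGroup (boxRels T E)) =
      of (.inr (m, algebraMap K E k * e)) :=
  mk_eq_mk_of_mul_inv_mem (Or.inr <| Or.inr <| Or.inr <| Or.inr <| Or.inl ⟨m, k, e, rfl⟩)

lemma box_of_inr_ι (v : M₀) (e : E) :
    (of (.inr (T.ι v, e)) : PresentedGroup (boxRels T E)) = of (.inl ((e * e) ⊗ₜ[K] v)) :=
  mk_eq_mk_of_mul_inv_mem (Or.inr <| Or.inr <| Or.inr <| Or.inr <| Or.inr <| Or.inr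
    ⟨v, e, rfl⟩)

lemma box_of_inl_eq_one_of_act_eq_ι {m : M} {k : K} {v : M₀}
    (hk : algebraMap K E k = 0) (hmk : T.act m k = T.ι v) (e : E) :
    (of (.inl ((e * e) ⊗ₜ[K] v)) : PresentedGroup (boxRels T E)) = 1 := by
  rw [← box_of_inr_ι, ← hmk, box_of_inr_act, hk, zero_mul, box_of_inr_zero]

end TwoStepNilMod

lemma Zsqrtd.map_sqrtd_eq_zero_of_two (f : ℤ√2 →+* ZMod 2) : f Zsqrtd.sqrtd = 0 := by
  refine pow_eq_zero_iff (n := 2) two_ne_zero |>.mp ?_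
  rw [← map_pow, sq, Zsqrtd.dmuld, map_intCast]
  rfl

theorem stmt_11_general [Algebra (Zsqrtd 2) (ZMod 2)] {M : Type}
    (T : TwoStepNilMod (Zsqrtd 2) M (Zsqrtd 2))
    (p : Zsqrtd 2 × Zsqrtd 2 → M)
    (hact : ∀ (x : Zsqrtd 2 × Zsqrtd 2) (k : Zsqrtd 2),
      p (k * x.1, k * k * x.2) = T.act (p x) k)
    (hι : ∀ a : Zsqrtd 2, T.ι a = p (0, a))
    (hker : ∀ x y : Zsqrtd 2 × Zsqrtd 2, p x = p y ↔
      ∃ k : Zsqrtd 2, y.1 = x.1 + k * Zsqrtd.sqrtd ∧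
        y.2 = x.2 + x.1 * (k * Zsqrtd.sqrtd) + k * k) :
    (∃ z : (ZMod 2) ⊗[Zsqrtd 2] (Zsqrtd 2), z ≠ 0) ∧
    ∀ x : (ZMod 2) ⊗[Zsqrtd 2] (Zsqrtd 2),
      (PresentedGroup.of (Sum.inl x) : PresentedGroup (boxRels T (ZMod 2))) = 1 := by
  have hs := Zsqrtd.map_sqrtd_eq_zero_of_two (algebraMap (ℤ√2) (ZMod 2))
  -- `(1, √2) · √2 = (√2, 2√2)`, which is `(0, 2√2 - 1)` modulo `A`
  have hm : T.act (p (1, Zsqrtd.sqrtd)) Zsqrtd.sqrtd = T.ι (2 * Zsqrtd.sqrtd - 1) := by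
    rw [hι, ← hact, hker]
    refine ⟨-1, by ring, ?_⟩
    linear_combination (1 - Zsqrtd.sqrtd) * Zsqrtd.dmuld (d := 2)
  refine ⟨⟨1 ⊗ₜ 1, fun h => ?_⟩, fun x => ?_⟩
  · simpa using congrArg (TensorProduct.rid (ℤ√2) (ZMod 2)) h
  · obtain ⟨c, rfl⟩ := (TensorProduct.rid (ℤ√2) (ZMod 2)).symm.surjective x
    have hc : c ⊗ₜ[ℤ√2] (1 : ℤ√2) = (c * c) ⊗ₜ[ℤ√2] (2 * Zsqrtd.sqrtd - 1) := by
      rw [← mul_one (2 * Zsqrtd.sqrtd - 1 : ℤ√2), ← smul_eq_mul (2 * Zsqrtd.sqrtd - 1 : ℤ√2),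
        ← TensorProduct.smul_tmul, Algebra.smul_def, map_sub, map_mul, hs, mul_zero, map_one]
      congr 1
      revert c
      decide
    rw [TensorProduct.rid_symm_apply, hc]
    exact T.box_of_inl_eq_one_of_act_eq_ι hs hm c

/-- There is a commutative ring `K` and a 2-step nilpotent `K`-module
that is not universal. Concretely, take `K = ℤ[√2]`, `M̃ = K ∔ K` the split 2-step
nilpotent `K`-module with cocycle `b(x,y) = xy`, and `M = M̃/A` where `A` is the
`K^•`-invariant subgroup generated by `(√2, 1)` (so `A = {(k√2, k²)}`). Then the
natural map `𝔽₂ ⊗_K M₀ → M ⊠_K 𝔽₂` is the zero map, hence not injective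
(`𝔽₂ ⊗_K M₀ ≠ 0`). Here `M` is encoded by a surjection `p : K × K → M` realizing
the quotient by `A`, and `M ⊠_K 𝔽₂` by the presented group on `boxRels`. -/
theorem stmt_11 [Algebra (Zsqrtd 2) (ZMod 2)] {M : Type}
    (T : TwoStepNilMod (Zsqrtd 2) M (Zsqrtd 2))
    (p : Zsqrtd 2 × Zsqrtd 2 → M)
    (hsurj : Function.Surjective p)
    (hmul : ∀ x y : Zsqrtd 2 × Zsqrtd 2,
      p (x.1 + y.1, x.2 + x.1 * y.1 + y.2) = T.mul (p x) (p y))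
    (hact : ∀ (x : Zsqrtd 2 × Zsqrtd 2) (k : Zsqrtd 2),
      p (k * x.1, k * k * x.2) = T.act (p x) k)
    (hι : ∀ a : Zsqrtd 2, T.ι a = p (0, a))
    (hτ : ∀ x : Zsqrtd 2 × Zsqrtd 2, T.τ (p x) = 2 * x.2 - x.1 * x.1)
    (hker : ∀ x y : Zsqrtd 2 × Zsqrtd 2, p x = p y ↔
      ∃ k : Zsqrtd 2, y.1 = x.1 + k * Zsqrtd.sqrtd ∧
        y.2 = x.2 + x.1 * (k * Zsqrtd.sqrtd) + k * k) :
    (∃ z : (ZMod 2) ⊗[Zsqrtd 2] (Zsqrtd 2), z ≠ 0) ∧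
    ∀ x : (ZMod 2) ⊗[Zsqrtd 2] (Zsqrtd 2),
      (PresentedGroup.of (Sum.inl x) : PresentedGroup (boxRels T (ZMod 2))) = 1 :=
  stmt_11_general T p hact hι hker
end

section
/- Let K be a commutative ring and consider the even quadratic K-algebra of linear type: R = K × K with involution (x, y)* = (y, x), L = R with l̄ = l*, A = K with action x · (y, z) = yxz, φ(x, y) = x + y, tr(x) = (x, x). Then for any right R-module M with hermitian and quadratic forms, the unitary group of the hyperbolic space H(P × 0) of a finite projective K-module P is isomorphic to GL(P), the group of K-linear automorphisms of P. -/
/-- Over the classical even quadratic `K`-algebra of linear type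
(`R = K × K` with involution `(x,y)* = (y,x)`, `L = R`, `A = K`,
`φ(x,y) = x + y`, `tr x = (x,x)`), the unitary group of the hyperbolic space
`H(P × 0)` of a finitely generated projective `K`-module `P` is isomorphic to
`GL(P)`.  `H(P × 0)` is realized inside `(P → K × K) × P` as the subset `S` of
pairs with `R`-linear first component, with the hyperbolic hermitian form `Bform`
and quadratic form `qform`; the isomorphism is an injective, multiplicative map
`F` from `GL(P)` onto the unitary automorphisms of `(S, Bform, qform)`. -/
theorem stmt_13 {K P : Type*} [CommRing K] [AddCommGroup P] [Module K P]
    [Module.Finite K P] [Module.Projective K P] :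
    letI bar : K × K → K × K := fun r => (r.2, r.1)
    letI psmul : P → K × K → P := fun p r => r.1 • p
    letI S : Set ((P → K × K) × P) :=
      {x | (∀ p p', x.1 (p + p') = x.1 p + x.1 p') ∧
        ∀ (p : P) (r : K × K), x.1 (psmul p r) = x.1 p * r}
    letI Bform : ((P → K × K) × P) → ((P → K × K) × P) → K × K :=
      fun x y => x.1 y.2 + bar (y.1 x.2)
    letI qform : ((P → K × K) × P) → K := fun x => (x.1 x.2).1 + (x.1 x.2).2
    letI actH : ((P → K × K) × P) → K × K → ((P → K × K) × P) :=
      fun x r => (fun p => bar r * x.1 p, psmul x.2 r)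
    ∃ F : (P →ₗ[K] P)ˣ → ((P → K × K) × P) → ((P → K × K) × P),
      -- each F u is a unitary automorphism of the quadratic module S
      (∀ u, ∀ x ∈ S, F u x ∈ S) ∧
      (∀ u, ∀ x ∈ S, ∀ y ∈ S, F u (x + y) = F u x + F u y) ∧
      (∀ u, ∀ x ∈ S, ∀ r, F u (actH x r) = actH (F u x) r) ∧
      (∀ u, ∀ x ∈ S, ∀ y ∈ S, Bform (F u x) (F u y) = Bform x y) ∧
      (∀ u, ∀ x ∈ S, qform (F u x) = qform x) ∧
      -- F is a group homomorphism
      (∀ x ∈ S, F 1 x = x) ∧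
      (∀ u v, ∀ x ∈ S, F (u * v) x = F u (F v x)) ∧
      -- F is injective
      (∀ u v, (∀ x ∈ S, F u x = F v x) → u = v) ∧
      -- F is surjective onto the unitary group of (S, Bform, qform)
      (∀ g : ((P → K × K) × P) → ((P → K × K) × P),
        (∀ x ∈ S, g x ∈ S) →
        (∀ x ∈ S, ∀ y ∈ S, g (x + y) = g x + g y) →
        (∀ x ∈ S, ∀ r, g (actH x r) = actH (g x) r) →
        (∀ x ∈ S, ∀ y ∈ S, Bform (g x) (g y) = Bform x y) →
        (∀ x ∈ S, qform (g x) = qform x) →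
        (∃ g' : ((P → K × K) × P) → ((P → K × K) × P),
          (∀ x ∈ S, g' x ∈ S) ∧ (∀ x ∈ S, g' (g x) = x) ∧ (∀ x ∈ S, g (g' x) = x)) →
        ∃ u, ∀ x ∈ S, F u x = g x) := by
  have icl : ∀ (u : (P →ₗ[K] P)ˣ) (p : P),
      (↑u⁻¹ : P →ₗ[K] P) ((↑u : P →ₗ[K] P) p) = p := by
    intro u p
    rw [← Module.End.mul_apply, u.inv_mul, Module.End.one_apply]
  -- arithmetic helpers in K × K
  have mul10 : ∀ z : K × K, z.2 = 0 → ((1:K),(0:K)) * z = z := by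
    intro z hz
    refine Prod.ext ?_ ?_ <;> simp [hz]
  have mul01 : ∀ z : K × K, z.2 = 0 → ((0:K),(1:K)) * z = 0 := by
    intro z hz
    refine Prod.ext ?_ ?_ <;> simp [hz]
  refine ⟨fun u x => (fun p => x.1 ((↑u⁻¹ : P →ₗ[K] P) p), (↑u : P →ₗ[K] P) x.2),
    ?_, ?_, ?_, ?_, ?_, ?_, ?_, ?_, ?_⟩
  · -- maps S to S
    intro u x hx
    refine ⟨fun p p' => ?_, fun p r => ?_⟩
    · dsimp only
      rw [map_add]
      exact hx.1 _ _
    · dsimp only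
      rw [map_smul]
      exact hx.2 _ r
  · -- additive
    intro u x _ y _
    dsimp only
    refine Prod.ext rfl (map_add _ _ _)
  · -- actH equivariant
    intro u x _ r
    dsimp only
    refine Prod.ext rfl ?_
    exact map_smul _ _ _
  · -- Bform preserved
    intro u x _ y _
    dsimp only
    rw [icl, icl]
  · -- qform preserved
    intro u x _
    dsimp only
    rw [icl]
  · -- F 1 = id
    intro x _
    dsimp only
    refine Prod.ext (funext fun p => ?_) ?_
    · show x.1 ((↑(1 : (P →ₗ[K] P)ˣ)⁻¹ : P →ₗ[K] P) p) = x.1 p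
      rw [inv_one, Units.val_one, Module.End.one_apply]
    · show (↑(1 : (P →ₗ[K] P)ˣ) : P →ₗ[K] P) x.2 = x.2
      rw [Units.val_one, Module.End.one_apply]
  · -- multiplicative
    intro u v x _
    dsimp only
    refine Prod.ext (funext fun p => ?_) ?_
    · show x.1 ((↑(u * v)⁻¹ : P →ₗ[K] P) p)
        = x.1 ((↑v⁻¹ : P →ₗ[K] P) ((↑u⁻¹ : P →ₗ[K] P) p))
      rw [mul_inv_rev, Units.val_mul, Module.End.mul_apply]
    · show (↑(u * v) : P →ₗ[K] P) x.2 = (↑u : P →ₗ[K] P) ((↑v : P →ₗ[K] P) x.2)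
      rw [Units.val_mul, Module.End.mul_apply]
  · -- injective
    intro u v h
    have hz : ∀ p : P, (((fun _ => (0 : K × K)), p) : (P → K × K) × P) ∈
        {x : (P → K × K) × P | (∀ p p', x.1 (p + p') = x.1 p + x.1 p') ∧
          ∀ (p : P) (r : K × K), x.1 ((fun p r => r.1 • p) p r) = x.1 p * r} :=
      fun p => ⟨fun _ _ => (add_zero 0).symm, fun _ r => (zero_mul r).symm⟩
    ext1
    ext p
    have h2 := congrArg Prod.snd (h ((fun _ => (0 : K × K)), p) (hz p))
    dsimp only at h2
    exact h2
  · -- surjective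
    intro g hS hadd hact hB hq hinv
    obtain ⟨g', hg'S, hg'g, hgg'⟩ := hinv
    have snd0 : ∀ x : (P → K × K) × P, ((∀ p p', x.1 (p + p') = x.1 p + x.1 p') ∧
          ∀ (p : P) (r : K × K), x.1 ((fun p r => r.1 • p) p r) = x.1 p * r) →
        ∀ q : P, (x.1 q).2 = 0 := by
      intro x hx q
      have h := hx.2 q ((1 : K), (0 : K))
      dsimp only at h
      rw [one_smul] at h
      have h2 := congrArg Prod.snd h
      simpa using h2
    have zmem : ∀ p : P, (((fun _ => (0 : K × K)), p) : (P → K × K) × P) ∈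
        {x : (P → K × K) × P | (∀ p p', x.1 (p + p') = x.1 p + x.1 p') ∧
          ∀ (p : P) (r : K × K), x.1 ((fun p r => r.1 • p) p r) = x.1 p * r} :=
      fun p => ⟨fun _ _ => (add_zero 0).symm, fun _ r => (zero_mul r).symm⟩
    -- g maps (0, p) to (0, u₀ p)
    have gz : ∀ p : P, g ((fun _ => (0 : K × K)), p)
        = ((fun _ => (0 : K × K)), (g ((fun _ => (0 : K × K)), p)).2) := by
      intro p
      have h := hact ((fun _ => (0 : K × K)), p) (zmem p) ((1 : K), (0 : K))
      dsimp only at h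
      have h1 : ((fun (_ : P) => ((0:K),(1:K)) * (0:K×K)), ((1:K) • p : P))
          = (((fun _ => (0 : K × K)), p) : (P → K × K) × P) :=
        Prod.ext (funext fun _ => mul_zero _) (one_smul _ _)
      rw [h1] at h
      refine h.trans (Prod.ext (funext fun q => ?_) (one_smul _ _))
      exact mul01 _ (snd0 _ (hS _ (zmem p)) q)
    set u₀ : P → P := fun p => (g ((fun _ => (0 : K × K)), p)).2 with hu₀
    have u₀add : ∀ p p', u₀ (p + p') = u₀ p + u₀ p' := by
      intro p p'
      have h := hadd _ (zmem p) _ (zmem p')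
      have hz : (((fun _ => (0 : K × K)), p) : (P → K × K) × P)
          + ((fun _ => (0 : K × K)), p') = ((fun _ => (0 : K × K)), p + p') :=
        Prod.ext (funext fun _ => add_zero 0) rfl
      rw [hz] at h
      exact congrArg Prod.snd h
    have u₀smul : ∀ (c : K) (p : P), u₀ (c • p) = c • u₀ p := by
      intro c p
      have h := hact ((fun _ => (0 : K × K)), p) (zmem p) ((c : K), (c : K))
      dsimp only at h
      have h1 : ((fun (_ : P) => ((c:K),(c:K)) * (0:K×K)), (c • p : P))
          = (((fun _ => (0 : K × K)), c • p) : (P → K × K) × P) :=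
        Prod.ext (funext fun _ => mul_zero _) rfl
      rw [h1] at h
      exact congrArg Prod.snd h
    have u₀inj : Function.Injective u₀ := by
      intro p p' hpp
      have h1 : g ((fun _ => (0 : K × K)), p) = g ((fun _ => (0 : K × K)), p') := by
        rw [gz p, gz p']
        exact Prod.ext rfl hpp
      have h2 := (hg'g _ (zmem p)).symm.trans
        ((congrArg g' h1).trans (hg'g _ (zmem p')))
      exact congrArg Prod.snd h2
    have actS : ∀ x : (P → K × K) × P, ((∀ p p', x.1 (p + p') = x.1 p + x.1 p') ∧
          ∀ (p : P) (r : K × K), x.1 ((fun p r => r.1 • p) p r) = x.1 p * r) →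
        ∀ r : K × K,
        (((fun q => (r.2, r.1) * x.1 q, r.1 • x.2) : (P → K × K) × P) ∈
          {x : (P → K × K) × P | (∀ p p', x.1 (p + p') = x.1 p + x.1 p') ∧
            ∀ (p : P) (r : K × K), x.1 ((fun p r => r.1 • p) p r) = x.1 p * r}) := by
      intro x hx r
      refine ⟨fun p p' => ?_, fun p r' => ?_⟩
      · dsimp only
        rw [hx.1, mul_add]
      · dsimp only
        have := hx.2 p r'
        dsimp only at this
        rw [this, mul_assoc]
    have u₀surj : Function.Surjective u₀ := by
      intro p
      have hyS := hg'S _ (zmem p)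
      have hgy : g (g' ((fun _ => (0 : K × K)), p)) = ((fun _ => (0 : K × K)), p) :=
        hgg' _ (zmem p)
      set y := g' ((fun _ => (0 : K × K)), p) with hy
      have h := hact y hyS ((1 : K), (0 : K))
      dsimp only at h
      have hgact : g ((fun q => ((0:K),(1:K)) * y.1 q, ((1:K) • y.2 : P))) = g y := by
        rw [h, hgy]
        refine Prod.ext (funext fun q => mul_zero _) (one_smul _ _)
      have key : ((fun q => ((0:K),(1:K)) * y.1 q, ((1:K) • y.2 : P)) : (P → K × K) × P)
          = y :=
        (hg'g _ (actS y hyS ((1:K),(0:K)))).symm.trans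
          ((congrArg g' hgact).trans (hg'g y hyS))
      have y1zero : y.1 = fun _ => (0 : K × K) := by
        funext q
        have h2 := congrArg (fun z : (P → K × K) × P => z.1 q) key
        dsimp only at h2
        rw [← h2]
        exact mul01 _ (snd0 y hyS q)
      refine ⟨y.2, ?_⟩
      show (g ((fun _ => (0 : K × K)), y.2)).2 = p
      have hyy : (((fun _ => (0 : K × K)), y.2) : (P → K × K) × P) = y :=
        Prod.ext y1zero.symm rfl
      rw [hyy, hgy]
    set u₀lin : P →ₗ[K] P :=
      { toFun := u₀, map_add' := u₀add, map_smul' := u₀smul } with hu₀lin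
    set e : P ≃ₗ[K] P := LinearEquiv.ofBijective u₀lin ⟨u₀inj, u₀surj⟩ with he
    have emul1 : e.toLinearMap * e.symm.toLinearMap = 1 :=
      LinearMap.ext fun p => e.apply_symm_apply p
    have emul2 : e.symm.toLinearMap * e.toLinearMap = 1 :=
      LinearMap.ext fun p => e.symm_apply_apply p
    refine ⟨⟨e.toLinearMap, e.symm.toLinearMap, emul1, emul2⟩, ?_⟩
    intro x hx
    dsimp only
    -- the inverse of the constructed unit is e.symm
    have hinv1 : (↑(⟨e.toLinearMap, e.symm.toLinearMap, emul1, emul2⟩ :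
        (P →ₗ[K] P)ˣ)⁻¹ : P →ₗ[K] P) = e.symm.toLinearMap := rfl
    rw [hinv1]
    -- decompose x
    have hxf : ((x.1, (0:P)) : (P → K × K) × P) ∈
        {x : (P → K × K) × P | (∀ p p', x.1 (p + p') = x.1 p + x.1 p') ∧
          ∀ (p : P) (r : K × K), x.1 ((fun p r => r.1 • p) p r) = x.1 p * r} :=
      ⟨hx.1, hx.2⟩
    have hsum : x = (x.1, (0:P)) + ((fun _ => (0 : K × K)), x.2) :=
      Prod.ext (funext fun q => (add_zero _).symm) (zero_add _).symm
    have hgsum : g x = g (x.1, (0:P)) + g ((fun _ => (0 : K × K)), x.2) := by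
      conv_lhs => rw [hsum]
      exact hadd _ hxf _ (zmem x.2)
    -- g (x.1, 0) = ((g (x.1,0)).1, 0)
    have gxf : g (x.1, (0:P)) = ((g (x.1, (0:P))).1, (0:P)) := by
      have h := hact (x.1, (0:P)) hxf ((0 : K), (1 : K))
      dsimp only at h
      have h1 : ((fun q => ((1:K),(0:K)) * x.1 q), ((0:K) • (0:P) : P))
          = ((x.1, (0:P)) : (P → K × K) × P) := by
        refine Prod.ext (funext fun q => mul10 _ (snd0 x hx q)) (zero_smul _ _)
      rw [h1] at h
      refine h.trans (Prod.ext (funext fun q => mul10 _ (snd0 _ (hS _ hxf) q))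
        (zero_smul _ _))
    -- pairing identity
    have hpair : ∀ q : P, (g (x.1, (0:P))).1 (u₀ q) = x.1 q := by
      intro q
      have h := hB (x.1, (0:P)) hxf _ (zmem q)
      dsimp only at h
      rw [gz q] at h
      have h2 : (g (x.1, (0:P))).1 (g ((fun _ => (0:K×K)), q)).2 = (g (x.1, (0:P))).1 (u₀ q) := rfl
      -- simplify h
      have hgxf2 : (g (x.1, (0:P))).2 = 0 := congrArg Prod.snd gxf
      rw [hgxf2] at h
      simpa using h
    -- conclude
    have heq : ∀ q : P, u₀ q = e q := fun q => rfl
    refine Prod.ext (funext fun p => ?_) ?_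
    · -- x.1 (e.symm p) = (g x).1 p
      have h1 : (g x).1 = (g (x.1, (0:P))).1 := by
        have := congrArg Prod.fst hgsum

        rw [this, gz x.2]
        funext q
        show (g (x.1, (0:P))).1 q + 0 = _
        rw [add_zero]
      rw [h1]
      have := hpair (e.symm p)
      have h3 : u₀ (e.symm p) = p := by
        rw [heq, e.apply_symm_apply]
      rw [h3] at this
      exact this.symm
    · -- e x.2 = (g x).2
      have h1 : (g x).2 = u₀ x.2 := by
        have := congrArg Prod.snd hgsum

        rw [this, Prod.snd_add, congrArg Prod.snd gxf]
        show 0 + (g ((fun _ => (0:K×K)), x.2)).2 = _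
        rw [zero_add]
      rw [h1]
      exact (heq x.2).symm
end

section
/- Fix distinct nonzero integers k₁, …, k_n. The fppf sheaf of non-unital algebras E ↦ E^n (on commutative K-algebras E) is generated by the elements (a^{k₁} − 1, …, a^{k_n} − 1) for a ∈ E*, i.e., the smallest fppf-subsheaf of non-unital subalgebras containing all such elements for all E is all of E ↦ E^n. In particular, its K-points contain the standard idempotents of K^n. -/
/-!
Let `b` be large enough that `eᵢ = kᵢ + b ≥ 0`, and let `S = E[X₁, …, Xₙ][1/f]` with
`f = (∏ Xⱼ) · det (Xⱼ^{eᵢ} − Xⱼ^b)`. In `S` the `Xⱼ` become units `uⱼ`, and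
`det (Xⱼ^{eᵢ} − Xⱼ^b) = (∏ uⱼ^b) · det (uⱼ^{kᵢ} − 1)`, so the generators `(uⱼ^{kᵢ} − 1)ᵢ` are the
columns of an invertible matrix and span `S^n`: `F S` is everything.
Since the `eᵢ` are distinct and different from `b`, only the identity permutation contributes
to the coefficient of `X^e` in the determinant, which is therefore `1`. A polynomial with a unit
coefficient stays nonzero modulo every maximal ideal `m` of `E`, hence takes a nonzero value at a
point over the algebraic closure of `E/m`; so `E → S` is faithfully flat, and it is of finite
presentation. Descent along it gives `F E = ⊤`.
-/

open MvPolynomial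

namespace MvPolynomial

variable {R ι : Type*} [CommRing R] [Fintype ι]

theorem prod_X_pow_eq_monomial_equivFunOnFinite (a : ι → ℕ) :
    ∏ j, (X j : MvPolynomial ι R) ^ a j = monomial (Finsupp.equivFunOnFinite.symm a) 1 := by
  classical
  simp only [X_pow_eq_monomial, ← monomial_sum_one, Finsupp.equivFunOnFinite_symm_eq_sum]

variable [DecidableEq ι]

theorem coeff_prod_X_pow_sub_X_pow (a : ι → ℕ) (b : ℕ) {d : ι →₀ ℕ} (hd : ∀ j, d j ≠ b) :
    coeff d (∏ j, (X j ^ a j - X j ^ b : MvPolynomial ι R)) =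
      if Finsupp.equivFunOnFinite.symm a = d then 1 else 0 := by
  have hmonomial : ∀ t : Finset ι, (∏ j ∈ Finset.univ \ t, (X j : MvPolynomial ι R) ^ a j) *
      ∏ j ∈ t, X j ^ b =
        monomial (Finsupp.equivFunOnFinite.symm fun j => if j ∈ t then b else a j) 1 := by
    intro t
    rw [← prod_X_pow_eq_monomial_equivFunOnFinite, ← Finset.prod_mul_prod_compl t, mul_comm,
      Finset.compl_eq_univ_sdiff]
    congr 1 <;> refine Finset.prod_congr rfl fun j hj => ?_ <;> simp_all
  have hsupport : ∀ t : Finset ι,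
      Finsupp.equivFunOnFinite.symm (fun j => if j ∈ t then b else a j) = d ↔
        t = ∅ ∧ Finsupp.equivFunOnFinite.symm a = d := by
    intro t
    constructor
    · intro h
      have ht : t = ∅ := Finset.eq_empty_of_forall_notMem fun j hj =>
        hd j (by simp [← h, hj])
      subst ht
      simpa using h
    · rintro ⟨rfl, rfl⟩
      simp
  have hsign : ∀ m : ℕ, (-1 : MvPolynomial ι R) ^ m = C ((-1) ^ m) := by simp
  simp only [Finset.prod_sub, coeff_sum, mul_assoc, hmonomial, hsign, coeff_C_mul,
    coeff_monomial, hsupport]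
  rw [Finset.sum_eq_single ∅]
  · simp
  · intro t _ ht
    simp [ht]
  · simp

noncomputable def powSubPowDet (e : ι → ℕ) (b : ℕ) : MvPolynomial ι R :=
  (Matrix.of fun i j => X j ^ e i - X j ^ b).det

theorem coeff_powSubPowDet {e : ι → ℕ} (he : Function.Injective e) {b : ℕ}
    (heb : ∀ i, e i ≠ b) :
    coeff (Finsupp.equivFunOnFinite.symm e) (powSubPowDet e b : MvPolynomial ι R) = 1 := by
  simp only [powSubPowDet, Matrix.det_apply, Matrix.of_apply, coeff_sum, Units.smul_def,
    coeff_smul, coeff_prod_X_pow_sub_X_pow (d := Finsupp.equivFunOnFinite.symm e) _ b heb]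
  rw [Finset.sum_eq_single 1]
  · simp
  · intro σ _ hσ
    rw [if_neg, smul_zero]
    refine fun h => hσ (Equiv.ext fun i => he ?_)
    exact DFunLike.congr_fun h i
  · simp

theorem coeff_prod_X_mul_powSubPowDet {e : ι → ℕ} (he : Function.Injective e) {b : ℕ}
    (heb : ∀ i, e i ≠ b) :
    coeff (Finsupp.equivFunOnFinite.symm 1 + Finsupp.equivFunOnFinite.symm e)
      ((∏ j, X j) * powSubPowDet e b : MvPolynomial ι R) = 1 := by
  have : ∏ j, (X j : MvPolynomial ι R) = monomial (Finsupp.equivFunOnFinite.symm 1) 1 := by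
    simpa using prod_X_pow_eq_monomial_equivFunOnFinite (R := R) (1 : ι → ℕ)
  rw [this, coeff_monomial_mul, one_mul, coeff_powSubPowDet he heb]

end MvPolynomial

theorem Module.FaithfullyFlat.of_forall_isMaximal_exists_ringHom {A B : Type*}
    [CommRing A] [CommRing B] [Algebra A B] [Module.Flat A B]
    (h : ∀ m : Ideal A, m.IsMaximal →
      ∃ (L : Type*) (_ : Field L) (χ : B →+* L), ∀ a ∈ m, χ (algebraMap A B a) = 0) :
    Module.FaithfullyFlat A B := by
  refine ⟨fun m hm htop => ?_⟩
  obtain ⟨L, _, χ, hχ⟩ := h m hm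
  have hle : m.map (algebraMap A B) ≤ RingHom.ker χ :=
    Ideal.map_le_iff_le_comap.mpr fun a ha => hχ a ha
  rw [Ideal.smul_top_eq_map, Submodule.restrictScalars_eq_top_iff] at htop
  exact RingHom.ker_ne_top χ (top_le_iff.mp (htop ▸ hle))

theorem MvPolynomial.faithfullyFlat_localizationAway {R σ : Type*} [CommRing R]
    {f : MvPolynomial σ R} {d : σ →₀ ℕ} (hd : IsUnit (coeff d f)) :
    Module.FaithfullyFlat R (Localization.Away f) := by
  refine .of_forall_isMaximal_exists_ringHom ?_
  intro m _
  let := Ideal.Quotient.field m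
  let L := AlgebraicClosure (R ⧸ m)
  let φ : R →+* L := (algebraMap (R ⧸ m) L).comp (Ideal.Quotient.mk m)
  have hφf : map φ f ≠ 0 := fun h => by
    have := congrArg (coeff d) h
    rw [coeff_map, coeff_zero] at this
    exact (hd.map φ).ne_zero this
  obtain ⟨x, hx⟩ : ∃ x : σ → L, eval x (map φ f) ≠ 0 := by
    by_contra! h
    exact hφf (MvPolynomial.funext fun x => by rw [h x, map_zero])
  have hunit : IsUnit (eval₂Hom φ x f) := by
    rw [isUnit_iff_ne_zero, coe_eval₂Hom, ← eval_map]
    exact hx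
  refine ⟨L, inferInstance, IsLocalization.Away.lift f hunit, fun a ha => ?_⟩
  rw [IsScalarTower.algebraMap_apply R (MvPolynomial σ R), IsLocalization.Away.lift_eq]
  simp [φ, Ideal.Quotient.eq_zero_iff_mem.mpr ha]

section

variable {ι : Type*} [Fintype ι] [DecidableEq ι]

theorem Matrix.det_pow_sub_pow_eq_prod_mul_det {S : Type*} [CommRing S] (u : ι → Sˣ)
    {k : ι → ℤ} {b : ℕ} {e : ι → ℕ} (he : ∀ i, (e i : ℤ) = k i + b) :
    (of fun i j => (u j : S) ^ e i - u j ^ b).det =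
      (∏ j, (u j : S) ^ b) * (of fun i j => ((u j ^ k i : Sˣ) : S) - 1).det := by
  rw [← det_mul_row]
  congr 1
  ext i j
  have : u j ^ e i = u j ^ b * u j ^ k i := by
    rw [← zpow_natCast, he, _root_.zpow_add, zpow_natCast, mul_comm]
  simp [mul_sub, ← Units.val_pow_eq_pow_val, this]

theorem MvPolynomial.exists_units_isUnit_det_zpow_sub_one {R S : Type*} [CommRing R] [CommRing S]
    [Algebra (MvPolynomial ι R) S] {k : ι → ℤ} {b : ℕ} {e : ι → ℕ}
    (he : ∀ i, (e i : ℤ) = k i + b)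
    (hf : IsUnit (algebraMap _ S ((∏ j, X j) * powSubPowDet e b : MvPolynomial ι R))) :
    ∃ u : ι → Sˣ, IsUnit (Matrix.of fun i j => ((u j ^ k i : Sˣ) : S) - 1).det := by
  have hX : ∀ j, IsUnit (algebraMap (MvPolynomial ι R) S (X j)) := fun j =>
    isUnit_of_dvd_unit (map_dvd _
      (dvd_mul_of_dvd_left (Finset.dvd_prod_of_mem _ (Finset.mem_univ j)) _)) hf
  have hD : IsUnit (algebraMap (MvPolynomial ι R) S (powSubPowDet e b)) :=
    isUnit_of_dvd_unit (map_dvd _ (dvd_mul_left _ _)) hf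
  refine ⟨fun j => (hX j).unit, ?_⟩
  have hmap : (algebraMap (MvPolynomial ι R) S).mapMatrix
      (Matrix.of fun i j => X j ^ e i - X j ^ b) =
      Matrix.of fun i j => ((hX j).unit : S) ^ e i - (hX j).unit ^ b := by
    ext i j
    simp
  rw [powSubPowDet, RingHom.map_det, hmap, Matrix.det_pow_sub_pow_eq_prod_mul_det _ he] at hD
  exact isUnit_of_mul_isUnit_right hD

theorem NonUnitalSubalgebra.eq_top_of_col_mem {S : Type*} [CommRing S]
    (A : NonUnitalSubalgebra S (ι → S)) {M : Matrix ι ι S} (hM : IsUnit M.det)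
    (hcol : ∀ j, M.col j ∈ A) : A = ⊤ := by
  have hspan : Submodule.span S (Set.range M.col) = ⊤ := by
    rw [← Matrix.range_mulVecLin, LinearMap.range_eq_top]
    exact Matrix.mulVec_surjective_iff_isUnit.mpr ((Matrix.isUnit_iff_isUnit_det M).mpr hM)
  rw [eq_top_iff]
  intro x _
  have hx : x ∈ Submodule.span S (Set.range M.col) := hspan ▸ Submodule.mem_top
  exact Submodule.span_le (p := A.toSubmodule).mpr (Set.range_subset_iff.mpr hcol) hx

end

theorem exists_natCast_eq_add {ι : Type*} [Fintype ι] (k : ι → ℤ) :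
    ∃ (b : ℕ) (e : ι → ℕ), ∀ i, (e i : ℤ) = k i + b := by
  refine ⟨∑ i, (k i).natAbs, fun i => (k i + ∑ i, (k i).natAbs).toNat, fun i => ?_⟩
  have : (k i).natAbs ≤ ∑ i, (k i).natAbs :=
    Finset.single_le_sum (f := fun i => (k i).natAbs) (fun _ _ => Nat.zero_le _)
      (Finset.mem_univ i)
  exact Int.toNat_of_nonneg (by omega)

theorem stmt_15_general (K : Type) [CommRing K] (n : ℕ) (k : Fin n → ℤ)
    (hk : Function.Injective k) (hk0 : ∀ i, k i ≠ 0)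
    (F : ∀ (E : Type) [CommRing E] [Algebra K E],
      NonUnitalSubalgebra E (Fin n → E))
    (hgen : ∀ (E : Type) [CommRing E] [Algebra K E] (a : Eˣ),
      (fun i => ((a ^ k i : Eˣ) : E) - 1) ∈ F E)
    (hdesc : ∀ (E E' : Type) [CommRing E] [CommRing E'] [Algebra K E]
      [Algebra K E'] [Algebra E E'] [IsScalarTower K E E'],
      Module.FaithfullyFlat E E' → Algebra.FinitePresentation E E' →
      ∀ x : Fin n → E, (fun i => algebraMap E E' (x i)) ∈ F E' → x ∈ F E) :
    (∀ (E : Type) [CommRing E] [Algebra K E], F E = ⊤) ∧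
    (∀ i : Fin n, Pi.single i (1 : K) ∈ F K) := by
  have htop : ∀ (E : Type) [CommRing E] [Algebra K E], F E = ⊤ := by
    intro E _ _
    obtain ⟨b, e, he⟩ := exists_natCast_eq_add k
    have he_inj : Function.Injective e := fun i j hij => hk (by have := he i; have := he j; omega)
    have heb : ∀ i, e i ≠ b := fun i hi => hk0 i (by have := he i; omega)
    let f : MvPolynomial (Fin n) E := (∏ j, X j) * powSubPowDet e b
    obtain ⟨u, hu⟩ := exists_units_isUnit_det_zpow_sub_one (S := Localization.Away f) he
      (IsLocalization.Away.algebraMap_isUnit f)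
    have hff := faithfullyFlat_localizationAway
      (coeff_prod_X_mul_powSubPowDet (R := E) he_inj heb ▸ isUnit_one)
    have hS := (F _).eq_top_of_col_mem hu fun j => hgen _ (u j)
    exact eq_top_iff.mpr fun x _ => hdesc E _ hff inferInstance x (hS ▸ trivial)
  exact ⟨htop, fun i => htop K ▸ trivial⟩

/-- Fix distinct nonzero integers `k₁, …, k_n`. Any fppf subsheaf of
non-unital subalgebras `F` of the sheaf `E ↦ E^n` (on commutative `K`-algebras)
which contains the elements `(a^{k₁} − 1, …, a^{k_n} − 1)` for every `E` and every
`a ∈ E*` must be everything; in particular its `K`-points contain the standard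
idempotents of `K^n`. Here functoriality and the fppf descent condition (along
faithfully flat finitely presented extensions) are hypotheses on `F`. -/
theorem stmt_15 (K : Type) [CommRing K] (n : ℕ) (k : Fin n → ℤ)
    (hk : Function.Injective k) (hk0 : ∀ i, k i ≠ 0)
    (F : ∀ (E : Type) [CommRing E] [Algebra K E],
      NonUnitalSubalgebra E (Fin n → E))
    (hfunc : ∀ (E E' : Type) [CommRing E] [CommRing E'] [Algebra K E]
      [Algebra K E'] (φ : E →ₐ[K] E') (x : Fin n → E),
      x ∈ F E → (fun i => φ (x i)) ∈ F E')
    (hgen : ∀ (E : Type) [CommRing E] [Algebra K E] (a : Eˣ),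
      (fun i => ((a ^ k i : Eˣ) : E) - 1) ∈ F E)
    (hdesc : ∀ (E E' : Type) [CommRing E] [CommRing E'] [Algebra K E]
      [Algebra K E'] [Algebra E E'] [IsScalarTower K E E'],
      Module.FaithfullyFlat E E' → Algebra.FinitePresentation E E' →
      ∀ x : Fin n → E, (fun i => algebraMap E E' (x i)) ∈ F E' → x ∈ F E) :
    (∀ (E : Type) [CommRing E] [Algebra K E], F E = ⊤) ∧
    (∀ i : Fin n, Pi.single i (1 : K) ∈ F K) :=
  stmt_15_general K n k hk hk0 F hgen hdesc
end

section
/- The outer automorphism group of the split general linear group scheme GL(n, −) for n ≥ 1, i.e., the automorphism group of its root datum preserving the standard base, is cyclic of order 2, generated by the automorphism σ with σ(e_i) = −e_{n+1−i} and σ(f_i) = −f_{n+1−i} (so σ(α_i) = α_{n−i}). -/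
/-- basis covector `f i` (also used for the basis `e i` of cocharacters). -/
def glBasis (n : ℕ) (i : Fin n) : Fin n → ℤ := Pi.single i 1

/-- the pairing `⟨·,·⟩ : X_* × X* → ℤ`. -/
def glDot {n : ℕ} (x y : Fin n → ℤ) : ℤ := ∑ i, x i * y i

/-- the simple root `α_i = f_i − f_{i+1}`. -/
def glSimpleRoot (n : ℕ) (i : Fin (n - 1)) : Fin n → ℤ :=
  glBasis n ⟨i.1, by have := i.isLt; omega⟩ - glBasis n ⟨i.1 + 1, by have := i.isLt; omega⟩

/-- `(τ, τ∨)` is an automorphism of the based root datum of `GL(n)`: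
it preserves the pairing, permutes the roots `f_i − f_j` compatibly with the
coroots `e_i − e_j`, and preserves the base `{α_i}`. -/
def IsBasedRootDatumAut (n : ℕ)
    (τ τv : (Fin n → ℤ) ≃ₗ[ℤ] (Fin n → ℤ)) : Prop :=
  (∀ x y, glDot (τv x) (τ y) = glDot x y) ∧
  (∀ i j : Fin n, i ≠ j → ∃ i' j' : Fin n, i' ≠ j' ∧
    τ (glBasis n i - glBasis n j) = glBasis n i' - glBasis n j' ∧
    τv (glBasis n i - glBasis n j) = glBasis n i' - glBasis n j') ∧
  (∀ i : Fin (n - 1), ∃ i' : Fin (n - 1), τ (glSimpleRoot n i) = glSimpleRoot n i')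

section Aux
variable {n : ℕ}

lemma glBasis_apply (i j : Fin n) : glBasis n i j = if i = j then 1 else 0 := by
  simp [glBasis, Pi.single_apply, eq_comm]
lemma glDot_basis_left (i : Fin n) (y : Fin n → ℤ) : glDot (glBasis n i) y = y i := by
  simp [glDot, glBasis, Pi.single_apply, ite_mul]
lemma glDot_basis_right (x : Fin n → ℤ) (j : Fin n) : glDot x (glBasis n j) = x j := by
  simp [glDot, glBasis, Pi.single_apply, mul_ite]
lemma glDot_sub_left (x x' y : Fin n → ℤ) : glDot (x - x') y = glDot x y - glDot x' y := by
  simp [glDot, sub_mul, Finset.sum_sub_distrib]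
lemma glDot_add_left (x x' y : Fin n → ℤ) : glDot (x + x') y = glDot x y + glDot x' y := by
  simp [glDot, add_mul, Finset.sum_add_distrib]
lemma glDot_add_right (x y y' : Fin n → ℤ) : glDot x (y + y') = glDot x y + glDot x y' := by
  simp [glDot, mul_add, Finset.sum_add_distrib]

lemma glBasis_sub_inj {i j i' j' : Fin n} (hij : i ≠ j) (hij' : i' ≠ j')
    (h : glBasis n i - glBasis n j = glBasis n i' - glBasis n j') : i = i' ∧ j = j' := by
  have h1 := congrFun h i
  have h2 := congrFun h j
  simp only [Pi.sub_apply, glBasis_apply] at h1 h2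
  refine ⟨?_, ?_⟩
  · by_contra hc
    have hc' : i' ≠ i := fun h => hc h.symm
    simp [hij.symm, hc'] at h1
    split_ifs at h1 <;> omega
  · by_contra hc
    have hc' : j' ≠ j := fun h => hc h.symm
    simp [hij, hc'] at h2
    split_ifs at h2 <;> omega

lemma glSimpleRoot_apply (i : Fin (n-1)) (j : Fin n) :
    glSimpleRoot n i j = (if i.1 = j.1 then 1 else 0) - (if i.1 + 1 = j.1 then 1 else 0) := by
  simp [glSimpleRoot, glBasis_apply, Fin.ext_iff]

lemma glCartan (i j : Fin (n-1)) :
    glDot (glSimpleRoot n i) (glSimpleRoot n j) =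
      if i.1 = j.1 then 2 else if i.1 + 1 = j.1 ∨ j.1 + 1 = i.1 then -1 else 0 := by
  have hi := i.isLt
  have hj := j.isLt
  rw [show glSimpleRoot n i = glBasis n ⟨i.1, by omega⟩ - glBasis n ⟨i.1 + 1, by omega⟩ from rfl,
    glDot_sub_left, glDot_basis_left, glDot_basis_left, glSimpleRoot_apply, glSimpleRoot_apply]
  simp only
  split_ifs <;> omega

def glSigma (n : ℕ) : (Fin n → ℤ) ≃ₗ[ℤ] (Fin n → ℤ) where
  toFun x := fun j => -x (Fin.rev j)
  invFun x := fun j => -x (Fin.rev j)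
  map_add' x y := by funext j; simp [neg_add]; ring
  map_smul' c x := by funext j; simp
  left_inv x := by funext j; simp
  right_inv x := by funext j; simp

lemma glSigma_apply (x : Fin n → ℤ) (j : Fin n) : glSigma n x j = -x (Fin.rev j) := rfl

lemma glSigma_sigma (x : Fin n → ℤ) : glSigma n (glSigma n x) = x := by
  funext j; simp [glSigma_apply]

lemma glSigma_pairing (x y : Fin n → ℤ) : glDot (glSigma n x) (glSigma n y) = glDot x y := by
  unfold glDot
  rw [← Equiv.sum_comp (Fin.revPerm) (fun i => x i * y i)]
  simp [glSigma_apply]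

lemma glSigma_sub_basis (a b : Fin n) :
    glSigma n (glBasis n a - glBasis n b) = glBasis n (Fin.rev b) - glBasis n (Fin.rev a) := by
  funext j
  simp only [glSigma_apply, Pi.sub_apply, glBasis_apply, Fin.ext_iff, Fin.val_rev]
  have := a.isLt; have := b.isLt; have := j.isLt
  split_ifs <;> omega

lemma glSigma_simpleRoot (i : Fin (n-1)) :
    glSigma n (glSimpleRoot n i) = glSimpleRoot n (Fin.rev i) := by
  funext j
  simp only [glSigma_apply, glSimpleRoot_apply, Fin.val_rev]
  have := i.isLt; have := j.isLt
  split_ifs <;> omega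

lemma glRepr (x : Fin n → ℤ) : x = ∑ i, x i • glBasis n i := by
  funext j
  simp [Finset.sum_apply, glBasis_apply]

lemma glExt (f g : (Fin n → ℤ) ≃ₗ[ℤ] (Fin n → ℤ))
    (h : ∀ i, f (glBasis n i) = g (glBasis n i)) (x : Fin n → ℤ) : f x = g x := by
  calc f x = f (∑ i, x i • glBasis n i) := by rw [← glRepr]
  _ = ∑ i, x i • f (glBasis n i) := by
      rw [map_sum]; exact Finset.sum_congr rfl fun i _ => map_smul f (x i) _
  _ = ∑ i, x i • g (glBasis n i) := by simp only [h]
  _ = g (∑ i, x i • glBasis n i) := by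
      rw [map_sum]; exact Finset.sum_congr rfl fun i _ => (map_smul g (x i) _).symm
  _ = g x := by rw [← glRepr]

end Aux
lemma fixed_case (n : ℕ) (hn : 1 ≤ n) (τ τv : (Fin n → ℤ) ≃ₗ[ℤ] (Fin n → ℤ))
    (hpair : ∀ x y, glDot (τv x) (τ y) = glDot x y)
    (hfix : ∀ i : Fin (n-1), τ (glSimpleRoot n i) = glSimpleRoot n i)
    (hfixv : ∀ i : Fin (n-1), τv (glSimpleRoot n i) = glSimpleRoot n i) :
    ((∀ x, τ x = x) ∧ (∀ x, τv x = x)) ∨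
    ((∀ x, τ x = glSigma n x) ∧ (∀ x, τv x = glSigma n x)) := by
  set i0 : Fin n := ⟨0, hn⟩ with hi0
  set c : Fin n → ℤ := τ (glBasis n i0) - glBasis n i0 with hc0
  set d : Fin n → ℤ := τv (glBasis n i0) - glBasis n i0 with hd0
  have hstep : ∀ (σ' : (Fin n → ℤ) ≃ₗ[ℤ] (Fin n → ℤ)),
      (∀ i : Fin (n-1), σ' (glSimpleRoot n i) = glSimpleRoot n i) →
      ∀ k (hk : k < n), σ' (glBasis n ⟨k, hk⟩) =
        glBasis n ⟨k, hk⟩ + (σ' (glBasis n i0) - glBasis n i0) := by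
    intro σ' hf k
    induction k with
    | zero => intro hk; simp [hi0]
    | succ k ih =>
      intro hk
      have hk' : k < n := by omega
      have hkm : k < n - 1 := by omega
      have hs := hf ⟨k, hkm⟩
      rw [show glSimpleRoot n ⟨k, hkm⟩ =
        glBasis n ⟨k, hk'⟩ - glBasis n ⟨k+1, hk⟩ from rfl, map_sub] at hs
      rw [ih hk'] at hs
      have h2 : σ' (glBasis n ⟨k+1, hk⟩) =
          glBasis n ⟨k, hk'⟩ + (σ' (glBasis n i0) - glBasis n i0)
          - (glBasis n ⟨k, hk'⟩ - glBasis n ⟨k+1, hk⟩) := by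
        rw [← hs]; abel
      rw [h2]; abel
  have hτb : ∀ i : Fin n, τ (glBasis n i) = glBasis n i + c := by
    intro i; simpa [hc0] using hstep τ hfix i.1 i.2
  have hτvb : ∀ i : Fin n, τv (glBasis n i) = glBasis n i + d := by
    intro i; simpa [hd0] using hstep τv hfixv i.1 i.2
  have key : ∀ i j : Fin n, c i + d j + glDot d c = 0 := by
    intro i j
    have hp := hpair (glBasis n i) (glBasis n j)
    rw [hτb, hτvb, glDot_add_left, glDot_add_right, glDot_add_right,
      glDot_basis_left, glDot_basis_left, glDot_basis_right] at hp
    linarith [hp]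
  set lam : ℤ := c i0 with hlam
  set mu : ℤ := d i0 with hmu
  have hcconst : ∀ i : Fin n, c i = lam := by
    intro i
    have k1 := key i i0
    have k2 := key i0 i0
    linarith
  have hdconst : ∀ j : Fin n, d j = mu := by
    intro j
    have k1 := key i0 j
    have k2 := key i0 i0
    linarith
  have hK : glDot d c = (n : ℤ) * (mu * lam) := by
    unfold glDot
    rw [Finset.sum_congr rfl fun i _ => by rw [hcconst i, hdconst i]]
    simp [Finset.sum_const, mul_comm]
  have heq : lam + mu + (n : ℤ) * (mu * lam) = 0 := by
    have h := key i0 i0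
    rw [hK] at h
    linarith
  have hsol : (lam = 0 ∧ mu = 0) ∨ (lam = mu ∧ (n : ℤ) * lam = -2) := by
    rcases eq_or_ne lam 0 with h0 | h0
    · left
      refine ⟨h0, ?_⟩
      rw [h0] at heq
      simpa using heq
    · have hmu0 : mu ≠ 0 := by
        rintro h
        rw [h] at heq
        simp at heq
        exact h0 (by linarith)
      have hd1 : lam ∣ mu := ⟨-(1 + (n:ℤ)*mu), by linear_combination heq⟩
      have hd2 : mu ∣ lam := ⟨-(1 + (n:ℤ)*lam), by linear_combination heq⟩
      have habs : lam.natAbs = mu.natAbs :=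
        Nat.dvd_antisymm (Int.natAbs_dvd_natAbs.2 hd1) (Int.natAbs_dvd_natAbs.2 hd2)
      rcases Int.natAbs_eq_natAbs_iff.1 habs with he | he
      · right
        refine ⟨he, ?_⟩
        rw [← he] at heq
        have hz : lam * (2 + (n:ℤ)*lam) = 0 := by linear_combination heq
        rcases mul_eq_zero.1 hz with h | h
        · exact absurd h h0
        · linarith
      · exfalso
        rw [he] at heq
        have hz : (n:ℤ) * (mu * mu) = 0 := by linear_combination -heq
        have hn' : (n:ℤ) ≠ 0 := Int.natCast_ne_zero.2 (by omega)
        exact hmu0 (mul_self_eq_zero.1 ((mul_eq_zero.1 hz).resolve_left hn'))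
  rcases hsol with ⟨hl, hm⟩ | ⟨hlm, hnl⟩
  · left
    constructor
    · intro x
      refine glExt τ (LinearEquiv.refl ℤ _) (fun i => ?_) x
      rw [hτb i]
      funext j
      have hcj : c j = 0 := by rw [hcconst j, hl]
      simp [hcj]
    · intro x
      refine glExt τv (LinearEquiv.refl ℤ _) (fun i => ?_) x
      rw [hτvb i]
      funext j
      have hdj : d j = 0 := by rw [hdconst j, hm]
      simp [hdj]
  · have hn2 : (n = 1 ∧ lam = -2) ∨ (n = 2 ∧ lam = -1) := by
      have h1 : lam < 0 := by nlinarith [Int.natCast_pos.2 (by omega : 0 < n)]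
      have h2 : (n:ℤ) ≤ 2 := by nlinarith [Int.natCast_pos.2 (by omega : 0 < n)]
      have h3 : n ≤ 2 := by exact_mod_cast h2
      have h4 : n = 1 ∨ n = 2 := by omega
      rcases h4 with h4 | h4 <;> [left; right] <;> refine ⟨h4, ?_⟩ <;>
        rw [h4] at hnl <;> push_cast at hnl <;> linarith
    have hkey : ∀ i : Fin n, glBasis n i + c = glSigma n (glBasis n i) := by
      intro i
      funext j
      have hij := i.isLt
      have hjj := j.isLt
      have hcj := hcconst j
      simp only [Pi.add_apply, glSigma_apply, glBasis_apply, Fin.ext_iff, Fin.val_rev]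
      rw [hcj]
      rcases hn2 with ⟨h1, h2⟩ | ⟨h1, h2⟩ <;> rw [h2] <;> split_ifs <;> omega
    have hdc : d = c := funext fun i => by rw [hcconst i, hdconst i, hlm]
    right
    constructor
    · exact fun x => glExt τ (glSigma n) (fun i => by rw [hτb i, hkey i]) x
    · exact fun x => glExt τv (glSigma n) (fun i => by rw [hτvb i, hdc, hkey i]) x

example (n : ℕ) : ⇑(glSigma n) = fun x (j : Fin n) => -x (Fin.rev j) := rfl

lemma classify (n : ℕ) (hn : 1 ≤ n) (τ τv : (Fin n → ℤ) ≃ₗ[ℤ] (Fin n → ℤ))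
    (h : IsBasedRootDatumAut n τ τv) :
    ((∀ x, τ x = x) ∧ (∀ x, τv x = x)) ∨
    ((∀ x, τ x = glSigma n x) ∧ (∀ x, τv x = glSigma n x)) := by
  obtain ⟨hpair, hroots, hbase⟩ := h
  choose π hπ using hbase
  have hπv : ∀ i : Fin (n-1), τv (glSimpleRoot n i) = glSimpleRoot n (π i) := by
    intro i
    have hi := i.isLt
    have hππ := (π i).isLt
    have ha1 : i.1 < n := by omega
    have ha2 : i.1 + 1 < n := by omega
    have hb1 : (π i).1 < n := by omega
    have hb2 : (π i).1 + 1 < n := by omega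
    have hab : (⟨i.1, ha1⟩ : Fin n) ≠ ⟨i.1+1, ha2⟩ := by simp [Fin.ext_iff]
    have hsr : glBasis n (⟨i.1, ha1⟩ : Fin n) - glBasis n ⟨i.1+1, ha2⟩
        = glSimpleRoot n i := rfl
    have hsr2 : glSimpleRoot n (π i) = glBasis n ⟨(π i).1, hb1⟩
        - glBasis n ⟨(π i).1+1, hb2⟩ := rfl
    have hne2 : (⟨(π i).1, hb1⟩ : Fin n) ≠ ⟨(π i).1+1, hb2⟩ := by simp [Fin.ext_iff]
    obtain ⟨i', j', hne, ht, htv⟩ := hroots ⟨i.1, ha1⟩ ⟨i.1+1, ha2⟩ hab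
    rw [hsr] at ht htv
    rw [hπ i] at ht
    rw [hsr2] at ht
    obtain ⟨e1, e2⟩ := glBasis_sub_inj hne2 hne ht
    rw [htv, ← e1, ← e2]
    exact hsr2.symm
  have key : ∀ i j : Fin (n-1),
      ((π i).1 = (π j).1 ↔ i.1 = j.1) ∧
      (((π i).1 + 1 = (π j).1 ∨ (π j).1 + 1 = (π i).1) ↔ (i.1 + 1 = j.1 ∨ j.1 + 1 = i.1)) := by
    intro i j
    have hc := hpair (glSimpleRoot n i) (glSimpleRoot n j)
    rw [hπ j, hπv i, glCartan, glCartan] at hc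
    split_ifs at hc <;> omega
  -- transfer to a function on ℕ
  set p : ℕ → ℕ := fun k => if hk : k < n - 1 then (π ⟨k, hk⟩).1 else 0 with hp
  have hpval : ∀ i : Fin (n-1), (π i).1 = p i.1 := by
    intro i
    simp [hp, i.isLt]
  have hplt : ∀ a, a < n-1 → p a < n-1 := by
    intro a ha
    simp only [hp, dif_pos ha]
    exact (π _).isLt
  have keyp : ∀ a b, a < n-1 → b < n-1 →
      ((p a = p b ↔ a = b) ∧ ((p a + 1 = p b ∨ p b + 1 = p a) ↔ (a+1 = b ∨ b+1 = a))) := by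
    intro a b ha hb
    have hk := key ⟨a, ha⟩ ⟨b, hb⟩
    have e1 : p a = (π ⟨a, ha⟩).1 := by simp [hp, ha]
    have e2 : p b = (π ⟨b, hb⟩).1 := by simp [hp, hb]
    rw [e1, e2]
    exact hk
  have hdi : (∀ i : Fin (n-1), (π i).1 = i.1) ∨ (∀ i : Fin (n-1), (π i).1 = n - 2 - i.1) := by
    by_cases hsmall : n ≤ 2
    · left; intro i; have h1 := i.isLt; have h2 := (π i).isLt; omega
    · push_neg at hsmall
      have h1m : 1 < n - 1 := by omega
      have hεpm : (p 1 : ℤ) - p 0 = 1 ∨ (p 1 : ℤ) - p 0 = -1 := by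
        have := (keyp 0 1 (by omega) h1m).2
        omega
      have hlin : ∀ k, k < n - 1 → (p k : ℤ) = p 0 + ((p 1 : ℤ) - p 0) * k := by
        intro k
        induction k using Nat.strong_induction_on with
        | _ k ih =>
          intro hk
          match k with
          | 0 => simp
          | 1 => push_cast; ring
          | (m+2) =>
            have e1 := ih (m+1) (by omega) (by omega)
            have e2 := ih m (by omega) (by omega)
            have e3 := (keyp (m+1) (m+2) (by omega) hk).2
            have e4 := (keyp (m+2) m hk (by omega)).1
            rcases hεpm with hE | hE <;> rw [hE] at e1 e2 ⊢ <;> omega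
      rcases hεpm with hE | hE
      · left
        intro i
        have hi := i.isLt
        have hq0 : p 0 = 0 := by
          have l1 := hlin (n-2) (by omega)
          have l2 := hplt (n-2) (by omega)
          rw [hE] at l1
          omega
        have l3 := hlin i.1 hi
        rw [hE] at l3
        rw [hpval i]
        omega
      · right
        intro i
        have hi := i.isLt
        have hq0 : p 0 = n - 2 := by
          have l1 := hlin (n-2) (by omega)
          have l2 := hplt 0 (by omega)
          rw [hE] at l1
          omega
        have l3 := hlin i.1 hi
        rw [hE] at l3
        rw [hpval i]
        omega
  rcases hdi with hid | hrev
  · exact fixed_case n hn τ τv hpair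
      (fun i => by rw [hπ i, show π i = i from Fin.ext (hid i)])
      (fun i => by rw [hπv i, show π i = i from Fin.ext (hid i)])
  · have hfix' : ∀ i : Fin (n-1), (τ.trans (glSigma n)) (glSimpleRoot n i) = glSimpleRoot n i := by
      intro i
      have hi := i.isLt
      have hrv : Fin.rev (π i) = i := by
        rw [Fin.ext_iff, Fin.val_rev, hrev i]
        omega
      simp only [LinearEquiv.trans_apply, hπ i, glSigma_simpleRoot, hrv]
    have hfixv' : ∀ i : Fin (n-1), (τv.trans (glSigma n)) (glSimpleRoot n i) = glSimpleRoot n i := by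
      intro i
      have hi := i.isLt
      have hrv : Fin.rev (π i) = i := by
        rw [Fin.ext_iff, Fin.val_rev, hrev i]
        omega
      simp only [LinearEquiv.trans_apply, hπv i, glSigma_simpleRoot, hrv]
    have hpair' : ∀ x y, glDot ((τv.trans (glSigma n)) x) ((τ.trans (glSigma n)) y) = glDot x y := by
      intro x y
      simp only [LinearEquiv.trans_apply, glSigma_pairing]
      exact hpair x y
    rcases fixed_case n hn (τ.trans (glSigma n)) (τv.trans (glSigma n)) hpair' hfix' hfixv'
      with ⟨h1, h2⟩ | ⟨h1, h2⟩
    · right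
      constructor
      · intro x
        have := h1 x
        simp only [LinearEquiv.trans_apply] at this
        have h3 := congrArg (glSigma n) this
        rwa [glSigma_sigma] at h3
      · intro x
        have := h2 x
        simp only [LinearEquiv.trans_apply] at this
        have h3 := congrArg (glSigma n) this
        rwa [glSigma_sigma] at h3
    · left
      constructor
      · intro x
        have := h1 x
        simp only [LinearEquiv.trans_apply] at this
        have h3 := congrArg (glSigma n) this
        rwa [glSigma_sigma, glSigma_sigma] at h3
      · intro x
        have := h2 x
        simp only [LinearEquiv.trans_apply] at this
        have h3 := congrArg (glSigma n) this
        rwa [glSigma_sigma, glSigma_sigma] at h3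

/-- The outer automorphism group of `GL(n, −)` for `n ≥ 1`, i.e. the
automorphism group of its based root datum, is cyclic of order 2 generated by the
automorphism `σ` with `σ(e_i) = −e_{n+1−i}`, `σ(f_i) = −f_{n+1−i}`
(so `σ(α_i) = α_{n−i}`); concretely `σ(x) = fun j => −x(rev j)`. -/
theorem stmt_17 (n : ℕ) (hn : 1 ≤ n) :
    letI sigmaFun : (Fin n → ℤ) → (Fin n → ℤ) := fun x j => -x (Fin.rev j)
    -- σ is an automorphism of the based root datum, of order exactly 2
    (∃ σL : (Fin n → ℤ) ≃ₗ[ℤ] (Fin n → ℤ),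
      ⇑σL = sigmaFun ∧ IsBasedRootDatumAut n σL σL) ∧
    (sigmaFun ∘ sigmaFun = id) ∧ sigmaFun ≠ id ∧
    -- and every automorphism of the based root datum is `id` or `σ`
    (∀ τ τv : (Fin n → ℤ) ≃ₗ[ℤ] (Fin n → ℤ), IsBasedRootDatumAut n τ τv →
      ((∀ x, τ x = x) ∧ (∀ x, τv x = x)) ∨
      ((∀ x, τ x = sigmaFun x) ∧ (∀ x, τv x = sigmaFun x))) := by
  refine ⟨⟨glSigma n, rfl,
    ⟨fun x y => glSigma_pairing x y,
     fun i j hij => ⟨Fin.rev j, Fin.rev i,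
       fun hc => hij (Fin.rev_injective hc).symm,
       glSigma_sub_basis i j, glSigma_sub_basis i j⟩,
     fun i => ⟨Fin.rev i, glSigma_simpleRoot i⟩⟩⟩, ?_, ?_, fun τ τv h => classify n hn τ τv h⟩
  · funext x
    funext j
    simp [Function.comp, Fin.rev_rev]
  · intro hid
    have := congrFun (congrFun hid (fun _ => (1:ℤ))) ⟨0, by omega⟩
    norm_num at this
end
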